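/- arXiv:0812.4279 — 8 statements merged into one kernel-verified Lean document; each statement's English description precedes it below -/
import Mathlib

section
/- (Markov–Lukács) A univariate real polynomial p is nonnegative on the interval [-1,1] if and only if there exist polynomials s and t, each a sum of squares of polynomials, such that p(x) = s(x) + (1 - x^2)·t(x). -/
/-!
Nonnegativity on `[-1, 1]` follows from the representation because `1 - x ^ 2 ≥ 0` there.
Conversely, the set of polynomials `s + (1 - X ^ 2) * t` is closed under products, contains every
square and nonnegative constant, and contains `1 ± X` since `2 (1 ± X) = (1 ± X) ^ 2 + (1 - X ^ 2)`.
From a nonnegative `p` of positive degree we split off a factor `d` from this set: an irreducible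
quadratic coming from a non-real root (a sum of two squares), a linear factor `X - r` or `r - X`
coming from a real root outside `(-1, 1)`, or `(X - r) ^ 2` for a root `r ∈ (-1, 1)`, which is a
double root because `p` has a local minimum there. The cofactor is again nonnegative on `[-1, 1]`,
and induction on the degree finishes the proof.
-/

open Polynomial Set

section Preordering

variable {R : Type*} [CommSemiring R]

theorem isSumSq_iff_exists_fin_sum_sq {s : R} :
    IsSumSq s ↔ ∃ (m : ℕ) (q : Fin m → R), s = ∑ i, q i ^ 2 := by
  constructor
  · intro hs
    induction hs with
    | zero => exact ⟨0, ![], by simp⟩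
    | sq_add a _ ih =>
      obtain ⟨m, q, rfl⟩ := ih
      exact ⟨m + 1, Fin.cons a q, by simp [Fin.sum_univ_succ, sq]⟩
  · rintro ⟨m, q, rfl⟩
    exact IsSumSq.sum_sq _ _

/-- The preordering generated by `g`: all `s + g * t` with `s` and `t` sums of squares. It is
closed under products because `g * g` is a square. -/
def sumSqPreordering (g : R) : Subsemiring R where
  carrier := {p | ∃ s t, IsSumSq s ∧ IsSumSq t ∧ p = s + g * t}
  mul_mem' := by
    rintro _ _ ⟨s, t, hs, ht, rfl⟩ ⟨s', t', hs', ht', rfl⟩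
    exact ⟨s * s' + g * g * (t * t'), s * t' + t * s',
      (hs.mul hs').add ((IsSumSq.mul_self g).mul (ht.mul ht')), (hs.mul ht').add (ht.mul hs'),
      by ring⟩
  one_mem' := ⟨1, 0, .one, .zero, by simp⟩
  add_mem' := by
    rintro _ _ ⟨s, t, hs, ht, rfl⟩ ⟨s', t', hs', ht', rfl⟩
    exact ⟨s + s', t + t', hs.add hs', ht.add ht', by ring⟩
  zero_mem' := ⟨0, 0, .zero, .zero, by simp⟩

theorem mem_sumSqPreordering_of_isSumSq {g p : R} (hp : IsSumSq p) : p ∈ sumSqPreordering g :=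
  ⟨p, 0, hp, .zero, by simp⟩

theorem sq_mem_sumSqPreordering (g a : R) : a ^ 2 ∈ sumSqPreordering g :=
  mem_sumSqPreordering_of_isSumSq (sq a ▸ .mul_self a)

theorem self_mem_sumSqPreordering (g : R) : g ∈ sumSqPreordering g :=
  ⟨0, 1, .zero, .one, by simp⟩

end Preordering

theorem Continuous.nonneg_on_Icc_of_ne {f : ℝ → ℝ} (hf : Continuous f) {a b r : ℝ} (hab : a < b)
    (h : ∀ x ∈ Icc a b, x ≠ r → 0 ≤ f x) : ∀ x ∈ Icc a b, 0 ≤ f x := by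
  have hsub : Ioo a b ∩ {r}ᶜ ⊆ {x | 0 ≤ f x} := fun x hx ↦ h x (Ioo_subset_Icc_self hx.1) hx.2
  calc Icc a b = closure (Ioo a b) := (closure_Ioo hab.ne).symm
    _ ⊆ closure (closure (Ioo a b ∩ {r}ᶜ)) :=
      closure_mono ((dense_compl_singleton r).open_subset_closure_inter isOpen_Ioo)
    _ ⊆ {x | 0 ≤ f x} := by
      rw [closure_closure]
      exact (isClosed_le continuous_const hf).closure_subset_iff.2 hsub

namespace Polynomial

theorem isSumSq_C {c : ℝ} (hc : 0 ≤ c) : IsSumSq (C c) := by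
  rw [← Real.mul_self_sqrt hc, C_mul]
  exact .mul_self _

theorem eval_nonneg_of_isSumSq {p : ℝ[X]} (hp : IsSumSq p) (x : ℝ) : 0 ≤ p.eval x := by
  induction hp with
  | zero => simp
  | sq_add a _ ih => simpa using add_nonneg (mul_self_nonneg (a.eval x)) ih

theorem eval_eq_zero_of_isLocalMin_X_sub_C_mul {q : ℝ[X]} {r : ℝ}
    (h : IsLocalMin (fun x ↦ ((X - C r) * q).eval x) r) : q.eval r = 0 := by
  have hderiv := h.deriv_eq_zero
  rw [Polynomial.deriv] at hderiv
  simpa [derivative_mul] using hderiv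

theorem natDegree_lt_of_eq_mul {p d q : ℝ[X]} (hp : p ≠ 0) (hd : 0 < d.natDegree)
    (h : p = d * q) : q.natDegree < p.natDegree := by
  subst h
  rw [natDegree_mul (left_ne_zero_of_mul hp) (right_ne_zero_of_mul hp)]
  omega

theorem eval_nonneg_of_eval_mul_nonneg {d q : ℝ[X]} {a b r : ℝ} (hab : a < b)
    (hdq : ∀ x ∈ Icc a b, 0 ≤ (d * q).eval x) (hd : ∀ x ∈ Icc a b, x ≠ r → 0 < d.eval x) :
    ∀ x ∈ Icc a b, 0 ≤ q.eval x :=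
  q.continuous.nonneg_on_Icc_of_ne hab fun x hx hxr ↦
    nonneg_of_mul_nonneg_right (by simpa using hdq x hx) (hd x hx hxr)

end Polynomial

section MarkovLukacs

local notation "𝒫" => sumSqPreordering (1 - X ^ 2 : ℝ[X])

theorem one_add_X_mem_sumSqPreordering : (1 + X : ℝ[X]) ∈ 𝒫 := by
  have h : C (1 / 2 : ℝ) * 2 = 1 := by rw [← C_ofNat, ← C_mul]; norm_num
  rw [show (1 + X : ℝ[X]) = C (1 / 2) * ((1 + X) ^ 2 + (1 - X ^ 2)) by
    linear_combination (-(1 + X : ℝ[X])) * h]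
  exact mul_mem (mem_sumSqPreordering_of_isSumSq (isSumSq_C (by norm_num)))
    (add_mem (sq_mem_sumSqPreordering _ _) (self_mem_sumSqPreordering _))

theorem one_sub_X_mem_sumSqPreordering : (1 - X : ℝ[X]) ∈ 𝒫 := by
  have h : C (1 / 2 : ℝ) * 2 = 1 := by rw [← C_ofNat, ← C_mul]; norm_num
  rw [show (1 - X : ℝ[X]) = C (1 / 2) * ((1 - X) ^ 2 + (1 - X ^ 2)) by
    linear_combination (-(1 - X : ℝ[X])) * h]
  exact mul_mem (mem_sumSqPreordering_of_isSumSq (isSumSq_C (by norm_num)))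
    (add_mem (sq_mem_sumSqPreordering _ _) (self_mem_sumSqPreordering _))

theorem X_sub_C_mem_sumSqPreordering {r : ℝ} (hr : r ≤ -1) : X - C r ∈ 𝒫 := by
  rw [show X - C r = (1 + X) + C (-1 - r) by simp only [C_sub, C_neg, C_1]; ring]
  exact add_mem one_add_X_mem_sumSqPreordering
    (mem_sumSqPreordering_of_isSumSq (isSumSq_C (by linarith)))

theorem C_sub_X_mem_sumSqPreordering {r : ℝ} (hr : 1 ≤ r) : C r - X ∈ 𝒫 := by
  rw [show C r - X = (1 - X) + C (r - 1) by simp only [C_sub, C_1]; ring]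
  exact add_mem one_sub_X_mem_sumSqPreordering
    (mem_sumSqPreordering_of_isSumSq (isSumSq_C (by linarith)))

theorem exists_factor_of_isRoot {p : ℝ[X]} {r : ℝ} (hr : p.IsRoot r)
    (hp : ∀ x ∈ Icc (-1 : ℝ) 1, 0 ≤ p.eval x) :
    ∃ d q, d ∈ 𝒫 ∧ 0 < d.natDegree ∧ p = d * q ∧ ∀ x ∈ Icc (-1 : ℝ) 1, 0 ≤ q.eval x := by
  obtain ⟨q, rfl⟩ := dvd_iff_isRoot.2 hr
  rcases le_or_gt r (-1) with hr₁ | hr₁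
  · refine ⟨X - C r, q, X_sub_C_mem_sumSqPreordering hr₁, by simp, rfl,
      eval_nonneg_of_eval_mul_nonneg (r := r) (by norm_num) hp fun x hx hxr ↦ ?_⟩
    simpa using lt_of_le_of_ne (hr₁.trans hx.1) hxr.symm
  rcases le_or_gt 1 r with hr₂ | hr₂
  · rw [show (X - C r) * q = (C r - X) * -q by ring] at hp ⊢
    refine ⟨C r - X, -q, C_sub_X_mem_sumSqPreordering hr₂,
      by rw [← neg_sub, natDegree_neg]; simp, rfl,
      eval_nonneg_of_eval_mul_nonneg (r := r) (by norm_num) hp fun x hx hxr ↦ ?_⟩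
    simpa using lt_of_le_of_ne (hx.2.trans hr₂) hxr
  -- an interior root of a function that is nonnegative around it is a double root
  have hmin : IsLocalMin (fun x ↦ ((X - C r) * q).eval x) r :=
    Filter.mem_of_superset (Ioo_mem_nhds hr₁ hr₂) fun x hx ↦ by
      simpa using hp x (Ioo_subset_Icc_self hx)
  obtain ⟨u, rfl⟩ := dvd_iff_isRoot.2 (eval_eq_zero_of_isLocalMin_X_sub_C_mul hmin)
  rw [← mul_assoc, ← sq] at hp ⊢
  refine ⟨(X - C r) ^ 2, u, sq_mem_sumSqPreordering _ _, by simp, rfl,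
    eval_nonneg_of_eval_mul_nonneg (r := r) (by norm_num) hp fun x _ hxr ↦ ?_⟩
  have : x - r ≠ 0 := sub_ne_zero.2 hxr
  simp only [eval_pow, eval_sub, eval_X, eval_C]
  positivity

theorem exists_factor_of_aeval_eq_zero {p : ℝ[X]} {z : ℂ} (hz : aeval z p = 0) (him : z.im ≠ 0)
    (hp : ∀ x ∈ Icc (-1 : ℝ) 1, 0 ≤ p.eval x) :
    ∃ d q, d ∈ 𝒫 ∧ 0 < d.natDegree ∧ p = d * q ∧ ∀ x ∈ Icc (-1 : ℝ) 1, 0 ≤ q.eval x := by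
  obtain ⟨q, rfl⟩ := p.quadratic_dvd_of_aeval_eq_zero_im_ne_zero hz him
  have hd : X ^ 2 - C (2 * z.re) * X + C (‖z‖ ^ 2) = (X - C z.re) ^ 2 + C (z.im ^ 2) := by
    rw [Complex.sq_norm, Complex.normSq_apply]
    simp only [C_add, C_mul, C_ofNat, C_pow]
    ring
  rw [hd] at hp ⊢
  refine ⟨_, q, add_mem (sq_mem_sumSqPreordering _ _) ?_, by rw [natDegree_add_C]; simp, rfl,
    eval_nonneg_of_eval_mul_nonneg (r := z.re) (by norm_num) hp fun x _ _ ↦ ?_⟩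
  · rw [C_pow]
    exact sq_mem_sumSqPreordering _ _
  · simp only [eval_add, eval_pow, eval_sub, eval_X, eval_C]
    positivity

theorem exists_factor_of_natDegree_pos {p : ℝ[X]} (hdeg : 0 < p.natDegree)
    (hp : ∀ x ∈ Icc (-1 : ℝ) 1, 0 ≤ p.eval x) :
    ∃ d q, d ∈ 𝒫 ∧ 0 < d.natDegree ∧ p = d * q ∧ ∀ x ∈ Icc (-1 : ℝ) 1, 0 ≤ q.eval x := by
  obtain ⟨z, hz⟩ :=
    IsAlgClosed.exists_aeval_eq_zero ℂ p (natDegree_pos_iff_degree_pos.1 hdeg).ne'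
  by_cases him : z.im = 0
  · have hre : algebraMap ℝ ℂ z.re = z := Complex.ext rfl (by simp [him])
    rw [← hre, aeval_algebraMap_apply_eq_algebraMap_eval] at hz
    exact exists_factor_of_isRoot (by simpa using hz) hp
  · exact exists_factor_of_aeval_eq_zero hz him hp

theorem mem_sumSqPreordering_of_nonneg {p : ℝ[X]} (hp : ∀ x ∈ Icc (-1 : ℝ) 1, 0 ≤ p.eval x) :
    p ∈ 𝒫 := by
  rcases Nat.eq_zero_or_pos p.natDegree with hdeg | hdeg
  · rw [eq_C_of_natDegree_eq_zero hdeg]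
    refine mem_sumSqPreordering_of_isSumSq (isSumSq_C ?_)
    simpa [coeff_zero_eq_eval_zero] using hp 0 (by norm_num)
  · obtain ⟨d, q, hd, hdd, rfl, hq⟩ := exists_factor_of_natDegree_pos hdeg hp
    have hlt : q.natDegree < (d * q).natDegree :=
      natDegree_lt_of_eq_mul (ne_zero_of_natDegree_gt hdeg) hdd rfl
    exact mul_mem hd (mem_sumSqPreordering_of_nonneg hq)
termination_by p.natDegree

theorem eval_nonneg_of_mem_sumSqPreordering {p : ℝ[X]} (hp : p ∈ 𝒫) :
    ∀ x ∈ Icc (-1 : ℝ) 1, 0 ≤ p.eval x := by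
  obtain ⟨s, t, hs, ht, rfl⟩ := hp
  intro x hx
  have hx' : 0 ≤ 1 - x ^ 2 := by nlinarith [hx.1, hx.2]
  simpa using
    add_nonneg (eval_nonneg_of_isSumSq hs x) (mul_nonneg hx' (eval_nonneg_of_isSumSq ht x))

theorem mem_sumSqPreordering_one_sub_X_sq_iff {p : ℝ[X]} :
    p ∈ 𝒫 ↔ ∀ x ∈ Icc (-1 : ℝ) 1, 0 ≤ p.eval x :=
  ⟨eval_nonneg_of_mem_sumSqPreordering, mem_sumSqPreordering_of_nonneg⟩

end MarkovLukacs

theorem stmt_1 (p : Polynomial ℝ) :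
    (∀ x ∈ Set.Icc (-1 : ℝ) 1, 0 ≤ p.eval x) ↔
    ∃ s t : Polynomial ℝ,
      (∃ (m : ℕ) (q : Fin m → Polynomial ℝ), s = ∑ i, (q i) ^ 2) ∧
      (∃ (m : ℕ) (q : Fin m → Polynomial ℝ), t = ∑ i, (q i) ^ 2) ∧
      p = s + (1 - Polynomial.X ^ 2) * t := by
  simp only [← isSumSq_iff_exists_fin_sum_sq]
  exact mem_sumSqPreordering_one_sub_X_sq_iff.symm
end

section
/- A univariate real polynomial p of degree at most 2d is a sum of squares of polynomials if and only if there exists a symmetric positive semidefinite matrix Q ∈ ℝ^{(d+1)×(d+1)} (rows and columns indexed 0,…,d) such that for each k, the coefficient of x^k in p equals ∑_{i+j=k} Q_{ij}. -/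
/-!
Write `q_l = ∑ i, B l i • X ^ i`. The `k`-th coefficient of `∑ l, q_l ^ 2` is the sum of the
entries of the Gram matrix `Bᵀ * B` along its `k`-th antidiagonal, and Gram matrices are exactly
the positive semidefinite ones; a square root of `Q` gives the `q_l` in the converse. The summands
of a sum of squares of degree `≤ 2d` have degree `≤ d`, because the top coefficients of squares
are positive and cannot cancel.
-/

open Matrix Polynomial Finset

namespace Polynomial

section CommRing

variable {R : Type*} [CommRing R]

noncomputable def ofFinCoeffs {n : ℕ} (v : Fin n → R) : R[X] := ∑ i : Fin n, monomial (i : ℕ) (v i)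

theorem coeff_ofFinCoeffs {n : ℕ} (v : Fin n → R) (i : Fin n) :
    (ofFinCoeffs v).coeff i = v i := by
  simp [ofFinCoeffs, finsetSum_coeff, coeff_monomial, Fin.val_inj]

theorem ofFinCoeffs_coeff {q : R[X]} {n : ℕ} (hq : q.natDegree < n) :
    ofFinCoeffs (fun i : Fin n => q.coeff i) = q := by
  rw [ofFinCoeffs, Fin.sum_univ_eq_sum_range (fun i => monomial i (q.coeff i)),
    ← as_sum_range' q n hq]

theorem coeff_ofFinCoeffs_mul_ofFinCoeffs {n : ℕ} (u v : Fin n → R) (k : ℕ) :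
    (ofFinCoeffs u * ofFinCoeffs v).coeff k =
      ∑ i : Fin n, ∑ j : Fin n, if (i : ℕ) + (j : ℕ) = k then u i * v j else 0 := by
  simp only [ofFinCoeffs, sum_mul, mul_sum, monomial_mul_monomial, finsetSum_coeff,
    coeff_monomial]
  exact sum_comm

theorem coeff_sum_sq_ofFinCoeffs {ι : Type*} [Fintype ι] {n : ℕ} (B : Matrix ι (Fin n) R)
    (k : ℕ) :
    (∑ l, ofFinCoeffs (B l) ^ 2).coeff k =
      ∑ i : Fin n, ∑ j : Fin n, if (i : ℕ) + (j : ℕ) = k then (Bᵀ * B) i j else 0 := by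
  simp only [finsetSum_coeff, sq, coeff_ofFinCoeffs_mul_ofFinCoeffs, mul_apply, transpose_apply,
    ite_sum_zero]
  rw [sum_comm]
  exact sum_congr rfl fun i _ => sum_comm

end CommRing

theorem two_mul_natDegree_le_natDegree_sum_sq {R ι : Type*} [CommRing R] [LinearOrder R]
    [IsStrictOrderedRing R] {s : Finset ι} (q : ι → R[X]) {i : ι} (hi : i ∈ s) :
    2 * (q i).natDegree ≤ (∑ j ∈ s, q j ^ 2).natDegree := by
  obtain ⟨l, hl, hlM⟩ := s.exists_mem_eq_sup ⟨i, hi⟩ (natDegree ∘ q)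
  set M := s.sup (natDegree ∘ q)
  have hiM : (q i).natDegree ≤ M := le_sup (f := natDegree ∘ q) hi
  rcases eq_or_ne (q l) 0 with hl0 | hl0
  · have : M = 0 := by simp [hlM, hl0]
    omega
  have hcoeff : (∑ j ∈ s, q j ^ 2).coeff (2 * M) = ∑ j ∈ s, (q j).coeff M ^ 2 := by
    rw [finsetSum_coeff]
    exact sum_congr rfl fun j hj => coeff_pow_of_natDegree_le (le_sup (f := natDegree ∘ q) hj)
  have hpos : 0 < (∑ j ∈ s, q j ^ 2).coeff (2 * M) := by
    rw [hcoeff]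
    refine sum_pos' (fun j _ => sq_nonneg _) ⟨l, hl, ?_⟩
    rw [hlM]
    exact pow_two_pos_of_ne_zero (leadingCoeff_ne_zero.mpr hl0)
  calc 2 * (q i).natDegree ≤ 2 * M := by omega
    _ ≤ _ := le_natDegree_of_ne_zero hpos.ne'

end Polynomial

theorem Matrix.posSemidef_iff_isSymm_and_dotProduct_mulVec_nonneg {n : Type*} [Fintype n]
    {Q : Matrix n n ℝ} : Q.PosSemidef ↔ Q.IsSymm ∧ ∀ x, 0 ≤ x ⬝ᵥ Q *ᵥ x := by
  simp [posSemidef_iff_dotProduct_mulVec, IsHermitian, IsSymm]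

open scoped ComplexOrder in
theorem Matrix.PosSemidef.exists_eq_conjTranspose_mul_self {n 𝕜 : Type*} [Fintype n] [RCLike 𝕜]
    {A : Matrix n n 𝕜} (hA : A.PosSemidef) : ∃ B : Matrix n n 𝕜, A = Bᴴ * B := by
  classical
  open MatrixOrder in exact CStarAlgebra.nonneg_iff_eq_star_mul_self.mp hA.nonneg

theorem stmt_2 (d : ℕ) (p : Polynomial ℝ) (hdeg : p.degree ≤ 2 * d) :
    (∃ (m : ℕ) (q : Fin m → Polynomial ℝ), p = ∑ i, (q i) ^ 2) ↔
    ∃ Q : Matrix (Fin (d + 1)) (Fin (d + 1)) ℝ,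
      Q.IsSymm ∧
      (∀ x : Fin (d + 1) → ℝ, 0 ≤ x ⬝ᵥ Q.mulVec x) ∧
      (∀ k : ℕ, p.coeff k = ∑ i : Fin (d + 1), ∑ j : Fin (d + 1),
        if (i : ℕ) + (j : ℕ) = k then Q i j else 0) := by
  constructor
  · rintro ⟨m, q, rfl⟩
    have hp : (∑ l, q l ^ 2).natDegree ≤ 2 * d := natDegree_le_iff_degree_le.mpr (mod_cast hdeg)
    have hq (l : Fin m) : (q l).natDegree < d + 1 := by
      have := two_mul_natDegree_le_natDegree_sum_sq q (mem_univ l)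
      omega
    let B : Matrix (Fin m) (Fin (d + 1)) ℝ := of fun l i => (q l).coeff i
    have hB (l : Fin m) : ofFinCoeffs (B l) = q l := ofFinCoeffs_coeff (hq l)
    obtain ⟨hsymm, hnonneg⟩ := posSemidef_iff_isSymm_and_dotProduct_mulVec_nonneg.mp
      (by simpa using posSemidef_conjTranspose_mul_self B)
    refine ⟨Bᵀ * B, hsymm, hnonneg, fun k => ?_⟩
    simp only [← coeff_sum_sq_ofFinCoeffs B, hB]
  · rintro ⟨Q, hsymm, hnonneg, hcoeff⟩
    obtain ⟨B, rfl⟩ := (posSemidef_iff_isSymm_and_dotProduct_mulVec_nonneg.mpr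
      ⟨hsymm, hnonneg⟩).exists_eq_conjTranspose_mul_self
    rw [conjTranspose_eq_transpose_of_trivial] at hcoeff
    exact ⟨d + 1, fun l => ofFinCoeffs (B l),
      ext fun k => by rw [hcoeff, coeff_sum_sq_ofFinCoeffs]⟩
end

section
/- If C is a compact Hausdorff space, μ is a finite regular Borel measure on C, f^1,…,f^k : C → [0,1] are Borel measurable functions with ∑_{j=1}^k f^j ≤ 1 pointwise, and δ > 0, then there exist continuous functions g^1,…,g^k : C → [0,1] with ∑_{j=1}^k g^j ≤ 1 pointwise and μ({x ∈ C : f^j(x) ≠ g^j(x)}) < δ for each j. -/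
open MeasureTheory ENNReal Filter Topology

/-!
Lusin's theorem, applied once to the vector-valued function `x ↦ (f j x)_j`, gives a closed set
`K` of almost full measure on which all `f j` are continuous. Tietze extends the vector function
from `K` to a continuous map into `ℝᵏ`, and composing with a continuous retraction of `ℝᵏ` onto
`{v | 0 ≤ v, ∑ v ≤ 1}` restores the constraints without changing the values on `K`, where they
already held.
-/

namespace MeasureTheory

variable {X E : Type*} [TopologicalSpace X] [MeasurableSpace X] {μ : Measure X} {ε : ℝ≥0∞}

theorem MemLp.exists_continuous_ae_tendsto [NormalSpace X] [BorelSpace X] [μ.WeaklyRegular]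
    [NormedAddCommGroup E] [NormedSpace ℝ E] {p : ℝ≥0∞} (hp0 : p ≠ 0) (hp : p ≠ ∞) {f : X → E}
    (hf : MemLp f p μ) :
    ∃ g : ℕ → X → E, (∀ n, Continuous (g n)) ∧
      ∀ᵐ x ∂μ, Tendsto (fun n ↦ g n x) atTop (𝓝 (f x)) := by
  have approx (n : ℕ) :=
    hf.exists_boundedContinuous_eLpNorm_sub_le hp (ENNReal.inv_ne_zero.2 (natCast_ne_top n))
  choose g hg hg_mem using approx
  have hLp : Tendsto (fun n ↦ eLpNorm ((g n : X → E) - f) p μ) atTop (𝓝 0) := by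
    refine tendsto_of_tendsto_of_tendsto_of_le_of_le tendsto_const_nhds
      ENNReal.tendsto_inv_nat_nhds_zero (fun _ ↦ zero_le) fun n ↦ ?_
    simpa only [eLpNorm_sub_comm] using hg n
  obtain ⟨ns, -, hae⟩ := (tendstoInMeasure_of_tendsto_eLpNorm hp0
    (fun n ↦ (hg_mem n).1) hf.1 hLp).exists_seq_tendsto_ae
  exact ⟨fun n ↦ g (ns n), fun n ↦ (g (ns n)).continuous, hae⟩

theorem exists_isClosed_measure_compl_lt_continuousOn_of_ae_tendsto [OpensMeasurableSpace X]
    [IsFiniteMeasure μ] [μ.WeaklyRegular] [PseudoMetricSpace E] [SecondCountableTopology E]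
    {g : ℕ → X → E} {f : X → E} (hg : ∀ n, Continuous (g n)) (hf : StronglyMeasurable f)
    (hgf : ∀ᵐ x ∂μ, Tendsto (fun n ↦ g n x) atTop (𝓝 (f x))) (hε : ε ≠ 0) :
    ∃ K, IsClosed K ∧ μ Kᶜ < ε ∧ ContinuousOn f K := by
  obtain ⟨r, -, hr0, hrε⟩ := ENNReal.lt_iff_exists_real_btwn.1 (ENNReal.half_pos hε)
  obtain ⟨t, ht, htμ, hunif⟩ := tendstoUniformlyOn_of_ae_tendsto'
    (fun n ↦ (hg n).stronglyMeasurable) hf hgf (ENNReal.ofReal_pos.1 hr0)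
  have hcont : ContinuousOn f tᶜ :=
    hunif.continuousOn (Frequently.of_forall fun n ↦ (hg n).continuousOn)
  obtain ⟨K, hKt, hK, hKμ⟩ :=
    ht.compl.exists_isClosed_sdiff_lt (measure_ne_top μ _) (ENNReal.half_pos hε).ne'
  refine ⟨K, hK, ?_, hcont.mono hKt⟩
  calc μ Kᶜ ≤ μ (t ∪ tᶜ \ K) := measure_mono fun x hx ↦ by by_cases x ∈ t <;> simp_all
    _ ≤ μ t + μ (tᶜ \ K) := measure_union_le _ _
    _ < ε / 2 + ε / 2 := ENNReal.add_lt_add (htμ.trans_lt hrε) hKμ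
    _ = ε := ENNReal.add_halves ε

theorem Integrable.exists_isClosed_measure_compl_lt_continuousOn [NormalSpace X] [BorelSpace X]
    [IsFiniteMeasure μ] [μ.WeaklyRegular] [NormedAddCommGroup E] [NormedSpace ℝ E]
    [SecondCountableTopology E] {f : X → E} (hf : Integrable f μ) (hfm : StronglyMeasurable f)
    (hε : ε ≠ 0) :
    ∃ K, IsClosed K ∧ μ Kᶜ < ε ∧ ContinuousOn f K := by
  obtain ⟨g, hg, hgf⟩ :=
    (memLp_one_iff_integrable.2 hf).exists_continuous_ae_tendsto one_ne_zero one_ne_top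
  exact exists_isClosed_measure_compl_lt_continuousOn_of_ae_tendsto hg hfm hgf hε

end MeasureTheory

section SubsimplexRetraction

variable {ι : Type*} [Fintype ι]

noncomputable def subsimplexRetraction (v : ι → ℝ) (i : ι) : ℝ :=
  max (v i) 0 / max 1 (∑ j, max (v j) 0)

private lemma max_one_sum_pos (v : ι → ℝ) : 0 < max 1 (∑ j, max (v j) 0) :=
  zero_lt_one.trans_le (le_max_left _ _)

theorem continuous_subsimplexRetraction : Continuous (subsimplexRetraction (ι := ι)) :=
  continuous_pi fun i ↦ ((continuous_apply i).max continuous_const).div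
    (continuous_const.max (continuous_finsetSum _ fun j _ ↦
      (continuous_apply j).max continuous_const))
    fun v ↦ (max_one_sum_pos v).ne'

theorem subsimplexRetraction_nonneg (v : ι → ℝ) (i : ι) : 0 ≤ subsimplexRetraction v i :=
  div_nonneg (le_max_right _ _) (max_one_sum_pos v).le

theorem sum_subsimplexRetraction_le_one (v : ι → ℝ) : ∑ i, subsimplexRetraction v i ≤ 1 := by
  simp only [subsimplexRetraction]
  rw [← Finset.sum_div, div_le_one (max_one_sum_pos v)]
  exact le_max_right _ _

theorem subsimplexRetraction_le_one (v : ι → ℝ) (i : ι) : subsimplexRetraction v i ≤ 1 :=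
  (Finset.single_le_sum (fun j _ ↦ subsimplexRetraction_nonneg v j) (Finset.mem_univ i)).trans
    (sum_subsimplexRetraction_le_one v)

theorem subsimplexRetraction_eq_self {v : ι → ℝ} (hv0 : ∀ i, 0 ≤ v i) (hv : ∑ i, v i ≤ 1) :
    subsimplexRetraction v = v := by
  funext i
  simp only [subsimplexRetraction, max_eq_left (hv0 _), max_eq_left hv, div_one]

end SubsimplexRetraction

theorem stmt_3 (C : Type*) [TopologicalSpace C] [CompactSpace C] [T2Space C]
    [MeasurableSpace C] [BorelSpace C]
    (μ : Measure C) [IsFiniteMeasure μ] [μ.Regular]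
    (k : ℕ) (f : Fin k → C → ℝ)
    (hf_meas : ∀ j, Measurable (f j))
    (hf_range : ∀ j x, f j x ∈ Set.Icc (0 : ℝ) 1)
    (hf_sum : ∀ x, ∑ j, f j x ≤ 1)
    (δ : ℝ≥0∞) (hδ : 0 < δ) :
    ∃ g : Fin k → C → ℝ,
      (∀ j, Continuous (g j)) ∧
      (∀ j x, g j x ∈ Set.Icc (0 : ℝ) 1) ∧
      (∀ x, ∑ j, g j x ≤ 1) ∧
      (∀ j, μ {x | f j x ≠ g j x} < δ) := by
  set F : C → Fin k → ℝ := fun x j ↦ f j x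
  have hF : Measurable F := measurable_pi_lambda _ hf_meas
  have hF_int : Integrable F μ := Integrable.of_bound hF.aestronglyMeasurable 1 <|
    .of_forall fun x ↦ (pi_norm_le_iff_of_nonneg zero_le_one).2 fun j ↦ by
      rw [Real.norm_eq_abs, abs_of_nonneg (hf_range j x).1]
      exact (hf_range j x).2
  obtain ⟨K, hK, hKμ, hFK⟩ :=
    hF_int.exists_isClosed_measure_compl_lt_continuousOn hF.stronglyMeasurable hδ.ne'
  obtain ⟨G, hG⟩ := ContinuousMap.exists_restrict_eq hK ⟨K.domRestrict F, hFK.domRestrict⟩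
  have hGK (x : C) (hx : x ∈ K) : subsimplexRetraction (G x) = F x := by
    rw [show G x = F x from DFunLike.congr_fun hG ⟨x, hx⟩]
    exact subsimplexRetraction_eq_self (fun j ↦ (hf_range j x).1) (hf_sum x)
  refine ⟨fun j x ↦ subsimplexRetraction (G x) j, fun j ↦ ?_,
    fun j x ↦ ⟨subsimplexRetraction_nonneg _ j, subsimplexRetraction_le_one _ j⟩,
    fun x ↦ sum_subsimplexRetraction_le_one _, fun j ↦ ?_⟩
  · exact (continuous_apply j).comp (continuous_subsimplexRetraction.comp G.continuous)
  · refine (measure_mono fun x hx ↦ ?_).trans_lt hKμ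
    exact fun hxK ↦ hx (congrFun (hGK x hxK) j).symm
end

section
/- If C ⊂ ℝ^d is compact, f^1,…,f^k : C → [0,1] are continuous functions with ∑_{j=1}^k f^j ≤ 1 pointwise, and δ > 0, then there exist polynomials p^1,…,p^k in d variables, each a square of a polynomial, taking values in [0,1] on C, such that |f^j(x) − p^j(x)| ≤ δ for all x ∈ C and all j, and ∑_{j=1}^k p^j(x) ≤ 1 for all x ∈ C. -/
/-!
Approximate `√((1 - ε) f^j)` uniformly on `C` by a polynomial `q^j` (Stone–Weierstrass) and take
`p^j = (q^j)²`. Squares are nonnegative, and shrinking `f^j` by the factor `1 - ε` leaves room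
`ε` in the constraint `∑ p^j ≤ 1` to absorb the `k` approximation errors, each below `ε / (k + 1)`.
-/

open MvPolynomial

theorem MvPolynomial.exists_eval_near_of_continuousOn {σ : Type*} {C : Set (σ → ℝ)}
    (hC : IsCompact C) {g : (σ → ℝ) → ℝ} (hg : ContinuousOn g C) {ε : ℝ} (hε : 0 < ε) :
    ∃ q : MvPolynomial σ ℝ, ∀ x ∈ C, |eval x q - g x| < ε := by
  have : CompactSpace C := isCompact_iff_compactSpace.mp hC
  let coord : σ → C(C, ℝ) := fun i =>
    ⟨fun x => (x : σ → ℝ) i, (continuous_apply i).comp continuous_subtype_val⟩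
  have aeval_coord_apply (q : MvPolynomial σ ℝ) (x : C) :
      aeval coord q x = eval (x : σ → ℝ) q := by
    rw [← ContinuousMap.evalAlgHom_apply (S := ℝ), comp_aeval_apply]
    rfl
  have hsep : (aeval (R := ℝ) coord).range.SeparatesPoints := by
    intro x y hxy
    obtain ⟨i, hi⟩ := Function.ne_iff.mp (Subtype.coe_ne_coe.mpr hxy)
    exact ⟨coord i, ⟨coord i, ⟨X i, aeval_X _ _⟩, rfl⟩, hi⟩
  obtain ⟨⟨_, q, rfl⟩, hq⟩ :=
    ContinuousMap.exists_mem_subalgebra_near_continuous_of_separatesPoints _ hsep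
      (C.domRestrict g) hg.domRestrict ε hε
  exact ⟨q, fun x hx => by simpa [aeval_coord_apply, Set.domRestrict] using hq ⟨x, hx⟩⟩

theorem abs_sq_sub_sq_le_three_mul {a b η : ℝ} (hab : |a - b| ≤ η) (hb : |b| ≤ 1) (hη : η ≤ 1) :
    |a ^ 2 - b ^ 2| ≤ 3 * η := by
  have hsum : |a + b| ≤ 3 := calc
    |a + b| = |(a - b) + 2 * b| := by ring_nf
    _ ≤ |a - b| + 2 * |b| := by simpa [abs_mul] using abs_add_le (a - b) (2 * b)
    _ ≤ 3 := by linarith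
  calc |a ^ 2 - b ^ 2| = |a - b| * |a + b| := by rw [← abs_mul]; ring_nf
    _ ≤ η * 3 := mul_le_mul hab hsum (abs_nonneg _) ((abs_nonneg _).trans hab)
    _ = 3 * η := mul_comm _ _

theorem MvPolynomial.exists_sq_eval_near_of_continuousOn {σ : Type*} {C : Set (σ → ℝ)}
    (hC : IsCompact C) {h : (σ → ℝ) → ℝ} (hh : ContinuousOn h C)
    (h_mem : ∀ x ∈ C, h x ∈ Set.Icc (0 : ℝ) 1) {η : ℝ} (hη : 0 < η) :
    ∃ q : MvPolynomial σ ℝ, ∀ x ∈ C, |eval x q ^ 2 - h x| ≤ η := by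
  set ε := min (η / 3) 1
  obtain ⟨q, hq⟩ := exists_eval_near_of_continuousOn hC (Real.continuous_sqrt.comp_continuousOn hh)
    (show 0 < ε by positivity)
  refine ⟨q, fun x hx => ?_⟩
  obtain ⟨h0, h1⟩ := h_mem x hx
  have hsqrt : |√(h x)| ≤ 1 := by
    rw [abs_of_nonneg (Real.sqrt_nonneg _)]; exact Real.sqrt_le_one.mpr h1
  calc |eval x q ^ 2 - h x| = |eval x q ^ 2 - √(h x) ^ 2| := by rw [Real.sq_sqrt h0]
    _ ≤ 3 * ε := abs_sq_sub_sq_le_three_mul (hq x hx).le hsqrt (min_le_right _ _)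
    _ ≤ η := by linarith [min_le_left (η / 3) 1]

theorem stmt_4 (d : ℕ) (C : Set (Fin d → ℝ)) (hC : IsCompact C)
    (k : ℕ) (f : Fin k → (Fin d → ℝ) → ℝ)
    (hf_cont : ∀ j, ContinuousOn (f j) C)
    (hf_range : ∀ j, ∀ x ∈ C, f j x ∈ Set.Icc (0 : ℝ) 1)
    (hf_sum : ∀ x ∈ C, ∑ j, f j x ≤ 1)
    (δ : ℝ) (hδ : 0 < δ) :
    ∃ p : Fin k → MvPolynomial (Fin d) ℝ,
      (∀ j, ∃ q : MvPolynomial (Fin d) ℝ, p j = q ^ 2) ∧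
      (∀ j, ∀ x ∈ C, MvPolynomial.eval x (p j) ∈ Set.Icc (0 : ℝ) 1) ∧
      (∀ j, ∀ x ∈ C, |f j x - MvPolynomial.eval x (p j)| ≤ δ) ∧
      (∀ x ∈ C, ∑ j, MvPolynomial.eval x (p j) ≤ 1) := by
  set ε := min (δ / 2) 1
  have hε : 0 < ε := by positivity
  have hε_le_one : ε ≤ 1 := min_le_right _ _
  have hε_le_δ : ε ≤ δ / 2 := min_le_left _ _
  set η := ε / (k + 1)
  have hη : 0 < η := by positivity
  have hkη : (k + 1) * η = ε := mul_div_cancel₀ _ (by positivity)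
  have hshrunk_mem : ∀ j, ∀ x ∈ C, (1 - ε) * f j x ∈ Set.Icc (0 : ℝ) 1 := fun j x hx =>
    ⟨mul_nonneg (by linarith) (hf_range j x hx).1,
      mul_le_one₀ (by linarith) (hf_range j x hx).1 (hf_range j x hx).2⟩
  choose q hq using fun j => exists_sq_eval_near_of_continuousOn (h := fun x => (1 - ε) * f j x)
    hC (continuousOn_const.mul (hf_cont j)) (hshrunk_mem j) hη
  have hsum : ∀ x ∈ C, ∑ j, eval x (q j ^ 2) ≤ 1 := by
    intro x hx
    calc ∑ j, eval x (q j ^ 2) ≤ ∑ j, ((1 - ε) * f j x + η) :=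
          Finset.sum_le_sum fun j _ => by rw [map_pow]; linarith [(abs_le.mp (hq j x hx)).2]
      _ = (1 - ε) * ∑ j, f j x + k * η := by simp [Finset.sum_add_distrib, Finset.mul_sum]
      _ ≤ 1 := by nlinarith [hf_sum x hx]
  have hsq_nonneg : ∀ j x, 0 ≤ eval x (q j ^ 2) := fun j x => by rw [map_pow]; positivity
  refine ⟨fun j => q j ^ 2, fun j => ⟨q j, rfl⟩, fun j x hx => ⟨hsq_nonneg j x, ?_⟩,
    fun j x hx => ?_, hsum⟩
  · exact (Finset.single_le_sum (fun i _ => hsq_nonneg i x) (Finset.mem_univ j)).trans (hsum x hx)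
  · -- `|f - p| ≤ ε f + η ≤ 2 ε ≤ δ`
    obtain ⟨hf0, hf1⟩ := hf_range j x hx
    have hp := abs_le.mp (hq j x hx)
    rw [map_pow, abs_le]
    constructor <;> nlinarith
end

section
/- In a continuous game, if a Borel probability measure π on C satisfies ∫ [u_i(ξ_i(s_i), s_{−i}) − u_i(s)] dπ(s) ≤ ε for every player i and every Borel measurable simple (finite-range) departure function ξ_i : C_i → C_i, then π satisfies the same inequality for every Borel measurable departure function ζ_i : C_i → C_i; i.e., simple departure functions suffice to define ε-correlated equilibria. -/
/-!
Fix a player `i`, a measurable departure `ζ` and `δ > 0`. Since `C` is compact, the map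
sending `y ∈ C_i` to the payoff function `s ↦ u_i(y, s_{-i})` is continuous into `C(C, ℝ)` with
the sup norm, so finitely many `δ`-balls around such payoff functions cover its image. Choosing
for each `y` the first covering centre gives a Borel simple map `r : C_i → C_i`, and the simple
departure `r ∘ ζ` earns at least the gain of `ζ` minus `δ` at every profile. Let `δ → 0`.

The product σ-algebra on `∏ C_j` may be smaller than the Borel one, so measurability of `u_i`
is not automatic; it follows from Stone–Weierstrass, which writes `u_i` as a uniform limit of
polynomials in functions of a single coordinate.
-/

open MeasureTheory

lemma Continuous.measurable_of_separatesPoints {X : Type*} [TopologicalSpace X] [CompactSpace X]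
    [MeasurableSpace X] {S : Set C(X, ℝ)} (hS : ∀ g ∈ S, Measurable g)
    (hsep : ∀ ⦃x y : X⦄, x ≠ y → ∃ g ∈ S, g x ≠ g y) {f : X → ℝ}
    (hf : Continuous f) : Measurable f := by
  set A := Algebra.adjoin ℝ S
  have hA_sep : A.SeparatesPoints := fun x y hxy => by
    obtain ⟨g, hgS, hg⟩ := hsep hxy
    exact ⟨g, ⟨g, Algebra.subset_adjoin hgS, rfl⟩, hg⟩
  have hA_meas : ∀ g ∈ A, Measurable (g : X → ℝ) := fun g hg => by
    induction hg using Algebra.adjoin_induction with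
    | mem g hg => exact hS g hg
    | algebraMap r => exact measurable_const
    | add a b _ _ ha hb => exact ha.add hb
    | mul a b _ _ ha hb => exact ha.mul hb
  have hf_closure : (⟨f, hf⟩ : C(X, ℝ)) ∈ closure (A : Set C(X, ℝ)) := by
    change _ ∈ A.topologicalClosure
    rw [ContinuousMap.subalgebra_topologicalClosure_eq_top_of_separatesPoints A hA_sep]
    trivial
  obtain ⟨g, hgA, hg_lim⟩ := mem_closure_iff_seq_limit.mp hf_closure
  exact measurable_of_tendsto_metrizable (fun m => hA_meas (g m) (hgA m))
    (tendsto_pi_nhds.mpr fun x => ((continuous_eval_const x).tendsto _).comp hg_lim)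

lemma Continuous.measurable_of_compactSpace_pi {ι : Type*} {C : ι → Type*}
    [∀ i, TopologicalSpace (C i)] [∀ i, CompactSpace (C i)] [∀ i, T2Space (C i)]
    [∀ i, MeasurableSpace (C i)] [∀ i, OpensMeasurableSpace (C i)]
    {f : (∀ i, C i) → ℝ} (hf : Continuous f) : Measurable f := by
  refine hf.measurable_of_separatesPoints
    (S := {g | ∃ (j : ι) (h : C(C j, ℝ)), g = h.comp ⟨fun s => s j, continuous_apply j⟩})
    ?_ (fun x y hxy => ?_)
  · rintro _ ⟨j, h, rfl⟩
    exact h.continuous.measurable.comp (measurable_pi_apply j)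
  · obtain ⟨j, hj⟩ := Function.ne_iff.mp hxy
    obtain ⟨h, hx, hy, -⟩ := exists_continuous_zero_one_of_isClosed
      (isClosed_singleton (x := x j)) (isClosed_singleton (x := y j))
      (Set.disjoint_singleton.mpr hj)
    refine ⟨_, ⟨j, h, rfl⟩, ?_⟩
    simp [hx rfl, hy rfl]

section SimpleApproximation

variable {X : Type*} [MeasurableSpace X] [Nonempty X]

lemma exists_simpleFunc_mem_of_mem_biUnion (U : X → Set X) (hU : ∀ x, MeasurableSet (U x))
    (t : Finset X) : ∃ r : SimpleFunc X X, ∀ y ∈ ⋃ x ∈ t, U x, y ∈ U (r y) := by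
  classical
  induction t using Finset.induction_on with
  | empty => exact ⟨SimpleFunc.const X (Classical.arbitrary X), by simp⟩
  | insert x t _ ih =>
    obtain ⟨r, hr⟩ := ih
    refine ⟨SimpleFunc.piecewise (U x) (hU x) (SimpleFunc.const X x) r, fun y hy => ?_⟩
    rw [SimpleFunc.piecewise_apply]
    split_ifs with hyx
    · exact hyx
    · simp only [Finset.set_biUnion_insert, Set.mem_union, hyx, false_or] at hy
      exact hr y hy

variable [TopologicalSpace X] [CompactSpace X] [OpensMeasurableSpace X]

lemma exists_simpleFunc_dist_lt {M : Type*} [PseudoMetricSpace M] {Φ : X → M}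
    (hΦ : Continuous Φ) {δ : ℝ} (hδ : 0 < δ) :
    ∃ r : SimpleFunc X X, ∀ y, dist (Φ y) (Φ (r y)) < δ := by
  set U : X → Set X := fun x => Φ ⁻¹' Metric.ball (Φ x) δ
  have hU_open : ∀ x, IsOpen (U x) := fun x => Metric.isOpen_ball.preimage hΦ
  obtain ⟨t, ht⟩ := isCompact_univ.elim_finite_subcover U hU_open
    fun y _ => Set.mem_iUnion.mpr ⟨y, Metric.mem_ball_self hδ⟩
  obtain ⟨r, hr⟩ :=
    exists_simpleFunc_mem_of_mem_biUnion U (fun x => (hU_open x).measurableSet) t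
  exact ⟨r, fun y => hr y (ht (Set.mem_univ y))⟩

end SimpleApproximation

section Deviations

variable {ι : Type*} [DecidableEq ι] {C : ι → Type*} [∀ i, TopologicalSpace (C i)]
  [∀ i, CompactSpace (C i)] [∀ i, MeasurableSpace (C i)] {u : (∀ i, C i) → ℝ}

lemma exists_simpleFunc_abs_update_sub_lt (i : ι) [OpensMeasurableSpace (C i)]
    [Nonempty (C i)] (hu : Continuous u) {δ : ℝ} (hδ : 0 < δ) :
    ∃ r : SimpleFunc (C i) (C i),
      ∀ y s, |u (Function.update s i y) - u (Function.update s i (r y))| < δ := by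
  let payoff : C(C i × (∀ j, C j), ℝ) :=
    ⟨fun p => u (Function.update p.2 i p.1), hu.comp (continuous_snd.update i continuous_fst)⟩
  obtain ⟨r, hr⟩ := exists_simpleFunc_dist_lt payoff.curry.continuous hδ
  exact ⟨r, fun y s => (ContinuousMap.dist_apply_le_dist s).trans_lt (hr y)⟩

lemma integrable_update_sub (hu : Continuous u) (hum : Measurable u) {i : ι} {η : C i → C i}
    (hη : Measurable η) (μ : Measure (∀ i, C i)) [IsFiniteMeasure μ] :
    Integrable (fun s => u (Function.update s i (η (s i))) - u s) μ := by
  obtain ⟨B, hB⟩ := (isCompact_range hu.norm).bddAbove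
  have hbound : ∀ φ : (∀ i, C i) → (∀ i, C i), Measurable φ → Integrable (u ∘ φ) μ :=
    fun φ hφ => .of_bound (hum.comp hφ).aestronglyMeasurable B
      (.of_forall fun s => hB ⟨φ s, rfl⟩)
  exact (hbound _ (measurable_update'.comp
    (measurable_id.prodMk (hη.comp (measurable_pi_apply i))))).sub (hbound id measurable_id)

end Deviations

theorem stmt_6_general (n : ℕ) (C : Fin n → Type*)
    [∀ i, TopologicalSpace (C i)] [∀ i, CompactSpace (C i)] [∀ i, T2Space (C i)]
    [∀ i, MeasurableSpace (C i)] [∀ i, BorelSpace (C i)]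
    (u : Fin n → (∀ i, C i) → ℝ) (hu : ∀ i, Continuous (u i))
    (π : Measure (∀ i, C i)) [IsProbabilityMeasure π]
    (ε : ℝ)
    (hsimple : ∀ i, ∀ ξ : C i → C i, Measurable ξ → (Set.range ξ).Finite →
      ∫ s, (u i (Function.update s i (ξ (s i))) - u i s) ∂π ≤ ε) :
    ∀ i, ∀ ζ : C i → C i, Measurable ζ →
      ∫ s, (u i (Function.update s i (ζ (s i))) - u i s) ∂π ≤ ε := by
  intro i ζ hζ
  have : Nonempty (C i) := ⟨(nonempty_of_isProbabilityMeasure π).some i⟩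
  have hint := fun {η : C i → C i} (hη : Measurable η) =>
    integrable_update_sub (hu i) (hu i).measurable_of_compactSpace_pi hη π
  refine le_of_forall_pos_le_add fun δ hδ => ?_
  obtain ⟨r, hr⟩ := exists_simpleFunc_abs_update_sub_lt i (hu i) hδ
  have hrζ : Measurable (r ∘ ζ) := r.measurable.comp hζ
  calc ∫ s, (u i (Function.update s i (ζ (s i))) - u i s) ∂π
      ≤ ∫ s, ((u i (Function.update s i (r (ζ (s i)))) - u i s) + δ) ∂π :=
        integral_mono (hint hζ) ((hint hrζ).add (integrable_const δ))
          fun s => by linarith [(abs_lt.mp (hr (ζ (s i)) s)).2]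
    _ = ∫ s, (u i (Function.update s i (r (ζ (s i)))) - u i s) ∂π + δ :=
        (integral_add (hint hrζ) (integrable_const δ)).trans (by simp)
    _ ≤ ε + δ := by
        gcongr
        exact hsimple i (r ∘ ζ) hrζ (r.finite_range.subset (Set.range_comp_subset_range ζ r))

theorem stmt_6 (n : ℕ) (C : Fin n → Type*)
    [∀ i, TopologicalSpace (C i)] [∀ i, CompactSpace (C i)] [∀ i, T2Space (C i)]
    [∀ i, MeasurableSpace (C i)] [∀ i, BorelSpace (C i)]
    (u : Fin n → (∀ i, C i) → ℝ) (hu : ∀ i, Continuous (u i))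
    (π : Measure (∀ i, C i)) [IsProbabilityMeasure π] [π.Regular]
    (ε : ℝ) (hε : 0 ≤ ε)
    (hsimple : ∀ i, ∀ ξ : C i → C i, Measurable ξ → (Set.range ξ).Finite →
      ∫ s, (u i (Function.update s i (ξ (s i))) - u i s) ∂π ≤ ε) :
    ∀ i, ∀ ζ : C i → C i, Measurable ζ →
      ∫ s, (u i (Function.update s i (ζ (s i))) - u i s) ∂π ≤ ε :=
  stmt_6_general n C u hu π ε hsimple
end

section
/- In a continuous game with finitely many players, a probability measure π is an ε-correlated equilibrium if and only if for every player i, positive integer k, strategies t_i^1,…,t_i^k ∈ C_i, and continuous functions f_i^1,…,f_i^k : C_i → [0,1] with ∑_{j=1}^k f_i^j ≤ 1 pointwise, the inequality ∑_{j=1}^k ∫ f_i^j(s_i)[u_i(t_i^j, s_{−i}) − u_i(s)] dπ(s) ≤ ε holds. -/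
/-!
(⇒) Stack the weights `f_0(x), …, f_{k-1}(x)` into consecutive layers
`[F_j(x), F_{j+1}(x)) ⊆ [0, 1)`, where `F_j = f_0 + ⋯ + f_{j-1}`. For each level `r ∈ [0, 1)`
the departure sending `x` to `t_j` when `r` lies in the `j`-th layer, and fixing `x` otherwise,
is measurable; its expected gain is at most `ε`, and averaging over `r` (Fubini) gives exactly
`∑_j ∫ f_j(s_i) [u_i(t_j, s_{-i}) - u_i(s)] dπ`.

(⇐) Since `C_i × C` is compact, a measurable departure `ζ` is within `δ` in gain of the
departure that equals `t_j` on the cell `ζ⁻¹(W_j)` of a measurable partition of `C_i`, and its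
gain is the sum of the condition with the indicator weights of these cells. The condition
extends from continuous to measurable weights: the marginal of `π` on `C_i` is weakly regular,
so continuous functions are dense in `L¹`, and clipping to positive parts and rescaling to total
mass `≤ 1` at most doubles the `L¹` error.
-/

open MeasureTheory Set

lemma abs_le_one_of_mem_Icc {b : ℝ} (hb : b ∈ Icc 0 1) : |b| ≤ 1 :=
  abs_le.2 ⟨by linarith [hb.1], hb.2⟩

section Integrability

variable {Ω : Type*} [MeasurableSpace Ω] {μ : Measure Ω} [IsFiniteMeasure μ]

lemma Measurable.integrable_of_abs_le {g : Ω → ℝ} (hg : Measurable g) {M : ℝ}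
    (hM : ∀ ω, |g ω| ≤ M) : Integrable g μ :=
  .of_bound hg.aestronglyMeasurable M (.of_forall fun ω => (Real.norm_eq_abs _).trans_le (hM ω))

lemma integrable_mul_of_mem_Icc {b g : Ω → ℝ} (hb : Measurable b) (hb01 : ∀ ω, b ω ∈ Icc 0 1)
    (hg : Measurable g) {M : ℝ} (hM : ∀ ω, |g ω| ≤ M) : Integrable (fun ω => b ω * g ω) μ :=
  (hg.integrable_of_abs_le hM).bdd_mul hb.aestronglyMeasurable (c := 1)
    (.of_forall fun ω => (Real.norm_eq_abs _).trans_le (abs_le_one_of_mem_Icc (hb01 ω)))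

end Integrability

section PartialSum

variable {k : ℕ}

def partialSum (w : Fin k → ℝ) (m : ℕ) : ℝ :=
  ∑ l ∈ Finset.univ.filter (fun l : Fin k => (l : ℕ) < m), w l

lemma partialSum_zero (w : Fin k → ℝ) : partialSum w 0 = 0 := by
  simp [partialSum]

lemma partialSum_succ (w : Fin k → ℝ) (j : Fin k) :
    partialSum w (j + 1) = partialSum w j + w j := by
  simp only [partialSum, Finset.sum_filter]
  rw [← Fintype.sum_ite_eq' j w, ← Finset.sum_add_distrib]
  refine Finset.sum_congr rfl fun l _ => ?_
  rcases lt_trichotomy (l : ℕ) j with h | h | h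
  · simp [h, Nat.lt_succ_of_lt h, Fin.ne_of_lt h]
  · simp [Fin.ext h]
  · simp [h.not_gt, Nat.lt_succ_iff.not.2 h.not_ge, (Fin.ne_of_lt h).symm]

lemma partialSum_of_le (w : Fin k → ℝ) {m : ℕ} (hm : k ≤ m) : partialSum w m = ∑ l, w l := by
  simp only [partialSum]
  rw [Finset.filter_true_of_mem fun (l : Fin k) _ => l.2.trans_le hm]

lemma monotone_partialSum {w : Fin k → ℝ} (hw : ∀ j, 0 ≤ w j) : Monotone (partialSum w) :=
  fun _ _ hmm' => Finset.sum_le_sum_of_subset_of_nonneg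
    (Finset.monotone_filter_right _ fun _ _ h => h.trans_le hmm') fun l _ _ => hw l

lemma measurable_partialSum {X : Type*} [MeasurableSpace X] {f : Fin k → X → ℝ}
    (hf : ∀ j, Measurable (f j)) (m : ℕ) :
    Measurable fun x => partialSum (fun j => f j x) m := by
  unfold partialSum
  fun_prop

end PartialSum

section Layers

variable {F : ℕ → ℝ} {r : ℝ} {k : ℕ}

lemma Nat.find_eq_iff_mem_Ico (hF : Monotone F) (hr : F 0 ≤ r) {j : ℕ} (hj : j < k)
    (h : ∃ m, k ≤ m ∨ r < F (m + 1)) :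
    Nat.find h = j ↔ r ∈ Ico (F j) (F (j + 1)) := by
  rw [Nat.find_eq_iff, mem_Ico, and_comm]
  simp only [hj.not_ge, false_or, not_or, not_le, not_lt]
  refine and_congr_left fun _ => ⟨fun hlt => ?_, fun hFj n hn => ⟨by omega, (hF hn).trans hFj⟩⟩
  rcases j with _ | j
  · exact hr
  · exact (hlt j j.lt_succ_self).2

lemma dite_find_eq_sum_indicator (hF : Monotone F) (hr : F 0 ≤ r)
    (h : ∃ m, k ≤ m ∨ r < F (m + 1)) (b : Fin k → ℝ) :
    (if hN : Nat.find h < k then b ⟨Nat.find h, hN⟩ else 0) =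
      ∑ j : Fin k, (Ico (F j) (F (j + 1))).indicator (fun _ => b j) r := by
  have hterm : ∀ j : Fin k, (Ico (F j) (F (j + 1))).indicator (fun _ => b j) r =
      if Nat.find h = j then b j else 0 := fun j => by
    simp only [indicator, ← Nat.find_eq_iff_mem_Ico hF hr j.2 h]
  simp only [hterm]
  split_ifs with hN
  · rw [Finset.sum_eq_single ⟨_, hN⟩ (fun j _ hj => if_neg fun h' => hj (Fin.ext h'.symm))
      (by simp), if_pos rfl]
  · exact (Finset.sum_eq_zero fun (j : Fin k) _ =>
      if_neg fun (h' : Nat.find h = j) => hN (h' ▸ j.2)).symm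

lemma setIntegral_Ico_sum_indicator (hF : Monotone F) (h0 : 0 ≤ F 0) (h1 : F k ≤ 1)
    (b : Fin k → ℝ) :
    ∫ r in Ico (0 : ℝ) 1, ∑ j : Fin k, (Ico (F j) (F (j + 1))).indicator (fun _ => b j) r =
      ∑ j : Fin k, (F (j + 1) - F j) * b j := by
  rw [integral_finsetSum _ fun j _ => (integrable_indicator_iff measurableSet_Ico).2
    integrableOn_const]
  refine Finset.sum_congr rfl fun j _ => ?_
  have hsub : Ico (F j) (F (j + 1)) ⊆ Ico 0 1 :=
    Ico_subset_Ico (h0.trans (hF (Nat.zero_le _))) ((hF j.2).trans h1)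
  rw [integral_indicator_const _ measurableSet_Ico, measureReal_restrict_apply measurableSet_Ico,
    inter_eq_left.2 hsub, Real.volume_real_Ico_of_le (hF (Nat.le_succ _)), smul_eq_mul]

end Layers

section Randomization

variable {Ω X : Type*} [MeasurableSpace X] {e : Ω → X} {Γ : X → Ω → ℝ} {k : ℕ}

lemma exists_measurable_layer_departure (hΓe : ∀ ω, Γ (e ω) ω = 0) (t : Fin k → X)
    {F : X → ℕ → ℝ} (hF : ∀ x, Monotone (F x)) (hF0 : ∀ x, F x 0 = 0)
    (hFm : ∀ m, Measurable fun x => F x m) {r : ℝ} (hr : 0 ≤ r) :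
    ∃ ζ : X → X, Measurable ζ ∧ ∀ ω, Γ (ζ (e ω)) ω =
      ∑ j : Fin k, (Ico (F (e ω) j) (F (e ω) (j + 1))).indicator (fun _ => Γ (t j) ω) r := by
  classical
  have h : ∀ x, ∃ m, k ≤ m ∨ r < F x (m + 1) := fun x => ⟨k, .inl le_rfl⟩
  let T : ℕ → X → X := fun m x => if hm : m < k then t ⟨m, hm⟩ else x
  refine ⟨fun x => T (Nat.find (h x)) x, Measurable.find (fun m => ?_) (fun m => ?_) h,
    fun ω => ?_⟩
  · by_cases hm : m < k <;> simp [T, hm, measurable_const, measurable_id']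
  · exact (MeasurableSet.const _).union (measurableSet_lt measurable_const (hFm _))
  · rw [← dite_find_eq_sum_indicator (hF (e ω)) ((hF0 _).trans_le hr) (h (e ω))]
    simp only [T]
    split_ifs <;> simp [hΓe]

variable [MeasurableSpace Ω] {π : Measure Ω} [IsProbabilityMeasure π] {ε : ℝ}

theorem sum_integral_mul_le_of_forall_departure (he : Measurable e)
    (hΓe : ∀ ω, Γ (e ω) ω = 0)
    (hyp : ∀ ζ : X → X, Measurable ζ → ∫ ω, Γ (ζ (e ω)) ω ∂π ≤ ε)
    (t : Fin k → X) (hΓt : ∀ j, Measurable (Γ (t j))) {M : ℝ} (hM : ∀ j ω, |Γ (t j) ω| ≤ M)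
    {f : Fin k → X → ℝ} (hf : ∀ j, Measurable (f j)) (hf0 : ∀ j x, 0 ≤ f j x)
    (hf1 : ∀ x, ∑ j, f j x ≤ 1) :
    ∑ j, ∫ ω, f j (e ω) * Γ (t j) ω ∂π ≤ ε := by
  set F : X → ℕ → ℝ := fun x => partialSum fun j => f j x
  have hF : ∀ x, Monotone (F x) := fun x => monotone_partialSum (hf0 · x)
  have hFm : ∀ m, Measurable fun x => F x m := measurable_partialSum hf
  have hf01 : ∀ j x, f j x ∈ Icc 0 1 := fun j x => ⟨hf0 j x,
    (Finset.single_le_sum (fun l _ => hf0 l x) (Finset.mem_univ j)).trans (hf1 x)⟩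
  set G : ℝ → Ω → ℝ := fun r ω =>
    ∑ j : Fin k, (Ico (F (e ω) j) (F (e ω) (j + 1))).indicator (fun _ => Γ (t j) ω) r
  have hG : Integrable (Function.uncurry fun ω r => G r ω)
      (π.prod (volume.restrict (Ico (0 : ℝ) 1))) := by
    refine integrable_finsetSum _ fun j _ => ?_
    have hFe : ∀ m, Measurable fun p : Ω × ℝ => F (e p.1) m := fun m =>
      (hFm m).comp (he.comp measurable_fst)
    exact (((hΓt j).comp measurable_fst).integrable_of_abs_le fun p => hM j p.1).indicator
      ((measurableSet_le (hFe _) measurable_snd).inter (measurableSet_lt measurable_snd (hFe _)))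
  have hlayer : ∀ ω, ∑ j, f j (e ω) * Γ (t j) ω = ∫ r in Ico (0 : ℝ) 1, G r ω := fun ω => by
    rw [setIntegral_Ico_sum_indicator (hF _) (partialSum_zero _).ge
      ((partialSum_of_le _ le_rfl).trans_le (hf1 _))]
    simp only [F, partialSum_succ, add_sub_cancel_left]
  calc ∑ j, ∫ ω, f j (e ω) * Γ (t j) ω ∂π
      = ∫ ω, ∑ j, f j (e ω) * Γ (t j) ω ∂π :=
        (integral_finsetSum _ fun j _ => integrable_mul_of_mem_Icc ((hf j).comp he)
          (fun ω => hf01 j _) (hΓt j) (hM j)).symm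
    _ = ∫ r in Ico (0 : ℝ) 1, ∫ ω, G r ω ∂π := by
        simp only [hlayer]
        exact integral_integral_swap hG
    _ ≤ ∫ _ in Ico (0 : ℝ) 1, ε := by
        refine setIntegral_mono_on hG.integral_prod_right
          (integrableOn_const measure_Ico_lt_top.ne) measurableSet_Ico fun r hr => ?_
        obtain ⟨ζ, hζ, hζG⟩ := exists_measurable_layer_departure hΓe t hF
          (fun x => partialSum_zero _) hFm hr.1
        simpa only [hζG] using hyp ζ hζ
    _ = ε := by simp

end Randomization

section Normalize

variable {κ : Type*} [Fintype κ]

noncomputable def normalizePos (h : κ → ℝ) (j : κ) : ℝ :=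
  max (h j) 0 / max 1 (∑ l, max (h l) 0)

lemma normalizePos_mem_Icc (h : κ → ℝ) (j : κ) : normalizePos h j ∈ Icc 0 1 := by
  refine ⟨by unfold normalizePos; positivity, div_le_one_of_le₀ ?_ (by positivity)⟩
  exact (Finset.single_le_sum (fun l _ => le_max_right (h l) 0) (Finset.mem_univ j)).trans
    (le_max_right _ _)

lemma sum_normalizePos_le_one (h : κ → ℝ) : ∑ j, normalizePos h j ≤ 1 := by
  simp only [normalizePos]
  rw [← Finset.sum_div]
  exact div_le_one_of_le₀ (le_max_right _ _) (by positivity)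

lemma continuous_normalizePos {X : Type*} [TopologicalSpace X] {h : κ → X → ℝ}
    (hh : ∀ j, Continuous (h j)) (j : κ) : Continuous fun x => normalizePos (h · x) j := by
  unfold normalizePos
  exact ((hh j).max continuous_const).div
    (continuous_const.max (continuous_finsetSum _ fun l _ => (hh l).max continuous_const))
    fun x => (one_pos.trans_le (le_max_left _ _)).ne'

lemma sum_abs_sub_normalizePos_le {a : κ → ℝ} (ha : ∀ j, 0 ≤ a j) (hsum : ∑ j, a j ≤ 1)
    (h : κ → ℝ) : ∑ j, |a j - normalizePos h j| ≤ 2 * ∑ j, |a j - h j| := by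
  set c := fun j => max (h j) 0
  set S := ∑ j, c j
  have hc : ∀ j, |a j - c j| ≤ |a j - h j| := fun j => by
    simpa [c, max_eq_left (ha j)] using abs_max_sub_max_le_abs (a j) (h j) 0
  have hfc : ∀ j, normalizePos h j ≤ c j := fun j =>
    div_le_self (le_max_right _ _) (le_max_left _ _)
  -- the mass removed by rescaling is the excess `S - 1` of `c` over the sub-probability `a`
  have hscale : S - S / max 1 S ≤ ∑ j, |a j - c j| := by
    rcases le_total S 1 with hS | hS
    · rw [max_eq_left hS, div_one, sub_self]
      positivity
    · rw [max_eq_right hS, div_self (by linarith)]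
      calc S - 1 ≤ ∑ j, (c j - a j) := by rw [Finset.sum_sub_distrib]; linarith
        _ ≤ ∑ j, |a j - c j| := Finset.sum_le_sum fun j _ => by
          rw [abs_sub_comm]; exact le_abs_self _
  calc ∑ j, |a j - normalizePos h j| ≤ ∑ j, (|a j - c j| + (c j - normalizePos h j)) :=
        Finset.sum_le_sum fun j _ => by
          simpa only [abs_of_nonneg (sub_nonneg.2 (hfc j))] using
            abs_sub_le (a j) (c j) (normalizePos h j)
    _ = ∑ j, |a j - c j| + (S - S / max 1 S) := by
        simp only [normalizePos]
        rw [Finset.sum_add_distrib, Finset.sum_sub_distrib, ← Finset.sum_div]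
    _ ≤ 2 * ∑ j, |a j - h j| := by
        linarith [Finset.sum_le_sum fun j (_ : j ∈ Finset.univ) => hc j]

end Normalize

section ContinuousWeights

variable {X κ Ω : Type*} [MeasurableSpace X] [Fintype κ] [MeasurableSpace Ω] {π : Measure Ω}
  [IsProbabilityMeasure π] {e : Ω → X} {g : κ → Ω → ℝ} {M : ℝ}

lemma sum_integral_mul_sub_le (he : Measurable e) (hg : ∀ j, Measurable (g j))
    (hM : ∀ j ω, |g j ω| ≤ M) {a b : κ → X → ℝ} (ha : ∀ j, Measurable (a j))
    (ha01 : ∀ j x, a j x ∈ Icc 0 1) (hb : ∀ j, Measurable (b j))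
    (hb01 : ∀ j x, b j x ∈ Icc 0 1) :
    ∑ j, ∫ ω, a j (e ω) * g j ω ∂π - ∑ j, ∫ ω, b j (e ω) * g j ω ∂π ≤
      |M| * ∫ x, ∑ j, |a j x - b j x| ∂(π.map e) := by
  have hai : ∀ j, Integrable (fun ω => a j (e ω) * g j ω) π := fun j =>
    integrable_mul_of_mem_Icc ((ha j).comp he) (fun ω => ha01 j (e ω)) (hg j) (hM j)
  have hbi : ∀ j, Integrable (fun ω => b j (e ω) * g j ω) π := fun j =>
    integrable_mul_of_mem_Icc ((hb j).comp he) (fun ω => hb01 j (e ω)) (hg j) (hM j)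
  have hmeas : Measurable fun x => ∑ j, |a j x - b j x| := by fun_prop
  rw [← Finset.sum_sub_distrib, integral_map he.aemeasurable hmeas.aestronglyMeasurable,
    ← integral_const_mul]
  simp only [← integral_sub (hai _) (hbi _)]
  rw [← integral_finsetSum (f := fun j ω => a j (e ω) * g j ω - b j (e ω) * g j ω) _
    fun j _ => (hai j).sub (hbi j)]
  refine integral_mono (integrable_finsetSum _ fun j _ => (hai j).sub (hbi j))
    (((hmeas.comp he).integrable_of_abs_le (M := ∑ _j : κ, 1) fun ω => ?_).const_mul _)
    fun ω => ?_
  · rw [Function.comp_apply, abs_of_nonneg (by positivity)]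
    exact Finset.sum_le_sum fun j _ => abs_sub_le_of_nonneg_of_le (ha01 j _).1 (ha01 j _).2
      (hb01 j _).1 (hb01 j _).2
  · rw [Finset.mul_sum]
    refine Finset.sum_le_sum fun j _ => ?_
    rw [← sub_mul, mul_comm |M|]
    calc (a j (e ω) - b j (e ω)) * g j ω ≤ |a j (e ω) - b j (e ω)| * |g j ω| := by
          rw [← abs_mul]; exact le_abs_self _
      _ ≤ |a j (e ω) - b j (e ω)| * |M| :=
          mul_le_mul_of_nonneg_left ((hM j ω).trans (le_abs_self M)) (abs_nonneg _)

variable [TopologicalSpace X] [NormalSpace X] [BorelSpace X]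

theorem exists_continuous_integral_sum_abs_sub_le (μ : Measure X) [IsFiniteMeasure μ]
    [μ.WeaklyRegular] {a : κ → X → ℝ} (ha : ∀ j, Measurable (a j))
    (ha01 : ∀ j x, a j x ∈ Icc 0 1) (hsum : ∀ x, ∑ j, a j x ≤ 1) {δ : ℝ} (hδ : 0 < δ) :
    ∃ f : κ → X → ℝ, (∀ j, Continuous (f j)) ∧ (∀ j x, f j x ∈ Icc 0 1) ∧
      (∀ x, ∑ j, f j x ≤ 1) ∧ ∫ x, ∑ j, |a j x - f j x| ∂μ ≤ δ := by
  have hai : ∀ j, Integrable (a j) μ := fun j =>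
    (ha j).integrable_of_abs_le fun x => abs_le_one_of_mem_Icc (ha01 j x)
  set δ' := δ / (2 * (Fintype.card κ + 1))
  choose h hah hhi using fun j => (hai j).exists_boundedContinuous_integral_sub_le
    (show 0 < δ' by positivity)
  set f : κ → X → ℝ := fun j x => normalizePos (h · x) j
  have hfc : ∀ j, Continuous (f j) := continuous_normalizePos fun l => (h l).continuous
  have hdiff : ∀ (b : κ → X → ℝ), (∀ j, Integrable (b j) μ) →
      Integrable (fun x => ∑ j, |a j x - b j x|) μ := fun b hb =>
    integrable_finsetSum _ fun j _ => ((hai j).sub (hb j)).abs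
  refine ⟨f, hfc, fun j x => normalizePos_mem_Icc _ j, fun x => sum_normalizePos_le_one _, ?_⟩
  calc ∫ x, ∑ j, |a j x - f j x| ∂μ ≤ ∫ x, 2 * ∑ j, |a j x - h j x| ∂μ :=
        integral_mono (hdiff f fun j => (hfc j).measurable.integrable_of_abs_le
          fun x => abs_le_one_of_mem_Icc (normalizePos_mem_Icc _ j))
          ((hdiff _ hhi).const_mul 2)
          fun x => sum_abs_sub_normalizePos_le (fun j => (ha01 j x).1) (hsum x) _
    _ = 2 * ∑ j, ∫ x, ‖a j x - h j x‖ ∂μ := by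
        rw [integral_const_mul]
        congr 1
        exact integral_finsetSum _ fun j _ => ((hai j).sub (hhi j)).abs
    _ ≤ 2 * ∑ _j : κ, δ' := by gcongr with j; exact hah j
    _ = δ * (Fintype.card κ / (Fintype.card κ + 1)) := by
        rw [Finset.sum_const, Finset.card_univ, nsmul_eq_mul]
        simp only [δ']
        field_simp
    _ ≤ δ := mul_le_of_le_one_right hδ.le (div_le_one_of_le₀ (by linarith) (by positivity))

theorem sum_integral_mul_le_of_forall_continuous (he : Measurable e) [(π.map e).WeaklyRegular]
    (hg : ∀ j, Measurable (g j)) (hM : ∀ j ω, |g j ω| ≤ M) {ε : ℝ}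
    (hyp : ∀ f : κ → X → ℝ, (∀ j, Continuous (f j)) → (∀ j x, f j x ∈ Icc 0 1) →
      (∀ x, ∑ j, f j x ≤ 1) → ∑ j, ∫ ω, f j (e ω) * g j ω ∂π ≤ ε)
    {a : κ → X → ℝ} (ha : ∀ j, Measurable (a j)) (ha01 : ∀ j x, a j x ∈ Icc 0 1)
    (hsum : ∀ x, ∑ j, a j x ≤ 1) :
    ∑ j, ∫ ω, a j (e ω) * g j ω ∂π ≤ ε := by
  refine le_of_forall_pos_le_add fun η hη => ?_
  obtain ⟨f, hfc, hf01, hfsum, hfa⟩ := exists_continuous_integral_sum_abs_sub_le (π.map e) ha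
    ha01 hsum (show 0 < η / (|M| + 1) by positivity)
  have herr := sum_integral_mul_sub_le (π := π) he hg hM ha ha01 (fun j => (hfc j).measurable)
    hf01
  have hf := hyp f hfc hf01 hfsum
  have hMη : |M| * (η / (|M| + 1)) ≤ η := by
    rw [mul_div_assoc']
    exact div_le_of_le_mul₀ (by positivity) hη.le (by linarith)
  nlinarith [mul_le_mul_of_nonneg_left hfa (abs_nonneg M)]

end ContinuousWeights

section Compactness

/-- The measurable structure on `∀ i, X i` is the product σ-algebra, in general smaller than the
Borel one, so `Continuous.measurable` does not apply. -/
theorem Continuous.measurable_of_pi_compactSpace {ι : Type*} {X : ι → Type*}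
    [∀ i, TopologicalSpace (X i)] [∀ i, CompactSpace (X i)] [∀ i, T2Space (X i)]
    [∀ i, MeasurableSpace (X i)] [∀ i, BorelSpace (X i)] {f : (∀ i, X i) → ℝ}
    (hf : Continuous f) : Measurable f := by
  let A : Subalgebra ℝ C(∀ i, X i, ℝ) := Algebra.adjoin ℝ
    (⋃ i, range fun g : C(X i, ℝ) => g.comp ⟨fun s => s i, continuous_apply i⟩)
  have hA : ∀ g ∈ A, Measurable g := fun g hg => by
    induction hg using Algebra.adjoin_induction with
    | mem g hg =>
      obtain ⟨i, g, rfl⟩ := mem_iUnion.1 hg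
      exact g.continuous.measurable.comp (measurable_pi_apply i)
    | algebraMap r => exact measurable_const
    | add g h _ _ hg hh => exact hg.add hh
    | mul g h _ _ hg hh => exact hg.mul hh
  have hsep : A.SeparatesPoints := fun x y hxy => by
    obtain ⟨i, hi⟩ := Function.ne_iff.1 hxy
    obtain ⟨g, hgx, hgy, -⟩ := exists_continuous_zero_one_of_isClosed isClosed_singleton
      isClosed_singleton (disjoint_singleton.2 hi)
    refine ⟨_, ⟨g.comp ⟨fun s => s i, continuous_apply i⟩,
      Algebra.subset_adjoin (mem_iUnion.2 ⟨i, g, rfl⟩), rfl⟩, ?_⟩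
    simp [hgx rfl, hgy rfl]
  have hfA : (⟨f, hf⟩ : C(∀ i, X i, ℝ)) ∈ closure (A : Set C(∀ i, X i, ℝ)) := by
    rw [← A.topologicalClosure_coe,
      ContinuousMap.subalgebra_topologicalClosure_eq_top_of_separatesPoints A hsep]
    trivial
  obtain ⟨g, hgA, hg⟩ := mem_closure_iff_seq_limit.1 hfA
  exact measurable_of_tendsto_metrizable (fun m => hA _ (hgA m))
    (tendsto_pi_nhds.2 fun s => ((continuous_eval_const s).tendsto _).comp hg)

theorem MeasureTheory.Measure.InnerRegularCompactLTTop.map_of_continuous_of_measurable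
    {α β : Type*} [MeasurableSpace α] [TopologicalSpace α] [MeasurableSpace β]
    [TopologicalSpace β] [BorelSpace β] {μ : Measure α} [h : μ.InnerRegularCompactLTTop]
    {f : α → β} (hf : Continuous f) (hfm : Measurable f) :
    (μ.map f).InnerRegularCompactLTTop := by
  constructor
  refine h.innerRegular.map hfm.aemeasurable ?_ (fun K hK => hK.image hf) fun s hs => hs.1
  rintro s ⟨hs, h's⟩
  exact ⟨hfm hs, by rwa [map_apply hfm hs] at h's⟩

lemma weaklyRegular_map_eval {ι : Type*} {C : ι → Type*} [∀ i, TopologicalSpace (C i)]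
    [∀ i, T2Space (C i)] [∀ i, MeasurableSpace (C i)] [∀ i, BorelSpace (C i)]
    (π : Measure (∀ i, C i)) [IsFiniteMeasure π] [π.Regular] (i : ι) :
    (π.map fun s => s i).WeaklyRegular := by
  have := Measure.InnerRegularCompactLTTop.map_of_continuous_of_measurable (μ := π)
    (continuous_apply i) (measurable_pi_apply i)
  infer_instance

variable {Y Z : Type*} [TopologicalSpace Y] [CompactSpace Y] [TopologicalSpace Z]
  [CompactSpace Z] {Φ : Y → Z → ℝ}

theorem exists_fin_open_cover_dist_lt (hΦ : Continuous (Function.uncurry Φ)) {δ : ℝ}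
    (hδ : 0 < δ) :
    ∃ (k : ℕ) (t : Fin k → Y) (U : Fin k → Set Y), (∀ j, IsOpen (U j)) ∧ (⋃ j, U j = univ) ∧
      ∀ j, ∀ y ∈ U j, ∀ z, |Φ y z - Φ (t j) z| < δ := by
  let Ψ : C(Y, C(Z, ℝ)) := ContinuousMap.curry ⟨_, hΦ⟩
  let V : Y → Set Y := fun y => Ψ ⁻¹' Metric.ball (Ψ y) δ
  have hV : ∀ y, IsOpen (V y) := fun y => Metric.isOpen_ball.preimage Ψ.continuous
  obtain ⟨T, hT⟩ := CompactSpace.elim_nhds_subcover V fun y =>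
    (hV y).mem_nhds (Metric.mem_ball_self hδ)
  refine ⟨T.card, fun j => T.equivFin.symm j, fun j => V (T.equivFin.symm j), fun j => hV _,
    ?_, fun j y hy z => ?_⟩
  · refine eq_univ_of_forall fun y => ?_
    obtain ⟨x, hxT, hyx⟩ := mem_iUnion₂.1 (hT ▸ mem_univ y : y ∈ ⋃ x ∈ T, V x)
    exact mem_iUnion.2 ⟨T.equivFin ⟨x, hxT⟩, by simpa using hyx⟩
  · exact (ContinuousMap.dist_apply_le_dist (f := Ψ y) (g := Ψ _) z).trans_lt hy

theorem exists_measurable_partition_le_sum_add [MeasurableSpace Y] [OpensMeasurableSpace Y]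
    {X : Type*} [MeasurableSpace X] (hΦ : Continuous (Function.uncurry Φ)) {ζ : X → Y}
    (hζ : Measurable ζ) {δ : ℝ} (hδ : 0 < δ) :
    ∃ (k : ℕ) (t : Fin k → Y) (a : Fin k → X → ℝ), (∀ j, Measurable (a j)) ∧
      (∀ j x, a j x ∈ Icc 0 1) ∧ (∀ x, ∑ j, a j x = 1) ∧
      ∀ x z, Φ (ζ x) z ≤ ∑ j, a j x * Φ (t j) z + δ := by
  obtain ⟨k, t, U, hUo, hUcov, hUt⟩ := exists_fin_open_cover_dist_lt hΦ hδ
  have hUm : ∀ j, MeasurableSet (disjointed U j) := fun j => by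
    rw [disjointed_apply, Finset.sup_set_eq_biUnion]
    exact (hUo j).measurableSet.diff
      (Finset.measurableSet_biUnion _ fun l _ => (hUo l).measurableSet)
  let a : Fin k → X → ℝ := fun j => (ζ ⁻¹' disjointed U j).indicator 1
  have hsel : ∀ x, ∃ j, ζ x ∈ U j ∧ ∀ c : Fin k → ℝ, ∑ l, a l x * c l = c j := fun x => by
    have hx : ζ x ∈ ⋃ j, disjointed U j := by
      rw [iUnion_disjointed, hUcov]
      trivial
    obtain ⟨j, hj⟩ := mem_iUnion.1 hx
    refine ⟨j, disjointed_subset U j hj, fun c => ?_⟩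
    rw [Finset.sum_eq_single j (fun l _ hl => ?_) (by simp)]
    · simp [a, hj]
    · simp [a, (disjoint_disjointed U hl).notMem_of_mem_right hj]
  refine ⟨k, t, a, fun j => measurable_one.indicator (hζ (hUm j)), fun j x => ?_,
    fun x => ?_, fun x z => ?_⟩
  · by_cases h : ζ x ∈ disjointed U j <;> simp [a, h]
  · obtain ⟨j, -, hj⟩ := hsel x
    simpa using hj 1
  · obtain ⟨j, hjU, hj⟩ := hsel x
    rw [hj]
    linarith [(abs_lt.1 (hUt j _ hjU z)).2]

end Compactness

section Game

variable {ι : Type*} [DecidableEq ι] {C : ι → Type*}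

def deviationGain (u : (∀ i, C i) → ℝ) (i : ι) (y : C i) (s : ∀ i, C i) : ℝ :=
  u (Function.update s i y) - u s

lemma deviationGain_self (u : (∀ i, C i) → ℝ) (i : ι) (s : ∀ i, C i) :
    deviationGain u i (s i) s = 0 := by
  simp [deviationGain]

variable [∀ i, TopologicalSpace (C i)] {u : (∀ i, C i) → ℝ}

lemma continuous_deviationGain (hu : Continuous u) (i : ι) :
    Continuous (Function.uncurry (deviationGain u i)) :=
  (hu.comp ((continuous_update i).comp (continuous_snd.prodMk continuous_fst))).sub
    (hu.comp continuous_snd)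

variable [∀ i, CompactSpace (C i)]

lemma exists_abs_deviationGain_le (hu : Continuous u) (i : ι) :
    ∃ M, ∀ y s, |deviationGain u i y s| ≤ M := by
  obtain ⟨M, hM⟩ := isCompact_univ.exists_bound_of_continuousOn
    (continuous_deviationGain hu i).continuousOn
  exact ⟨M, fun y s => hM (y, s) (mem_univ _)⟩

variable [∀ i, T2Space (C i)] [∀ i, MeasurableSpace (C i)] [∀ i, BorelSpace (C i)]

lemma measurable_deviationGain (hu : Continuous u) (i : ι) (y : C i) :
    Measurable (deviationGain u i y) :=
  ((continuous_deviationGain hu i).comp (Continuous.prodMk_right y)).measurable_of_pi_compactSpace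

lemma measurable_deviationGain_comp (hu : Continuous u) (i : ι) {ζ : C i → C i}
    (hζ : Measurable ζ) : Measurable fun s => deviationGain u i (ζ (s i)) s :=
  (hu.measurable_of_pi_compactSpace.comp
    (measurable_update'.comp (measurable_id.prodMk (hζ.comp (measurable_pi_apply i))))).sub
    hu.measurable_of_pi_compactSpace

variable {π : Measure (∀ i, C i)} [IsProbabilityMeasure π] {ε : ℝ}

theorem sum_integral_mul_deviationGain_le (hu : Continuous u) (i : ι)
    (hyp : ∀ ζ : C i → C i, Measurable ζ → ∫ s, deviationGain u i (ζ (s i)) s ∂π ≤ ε)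
    {k : ℕ} (t : Fin k → C i) {f : Fin k → C i → ℝ} (hf : ∀ j, Continuous (f j))
    (hf01 : ∀ j x, f j x ∈ Icc 0 1) (hfsum : ∀ x, ∑ j, f j x ≤ 1) :
    ∑ j, ∫ s, f j (s i) * deviationGain u i (t j) s ∂π ≤ ε := by
  obtain ⟨M, hM⟩ := exists_abs_deviationGain_le hu i
  exact sum_integral_mul_le_of_forall_departure (measurable_pi_apply i)
    (deviationGain_self u i) hyp t (fun j => measurable_deviationGain hu i (t j))
    (fun j => hM (t j)) (fun j => (hf j).measurable) (fun j x => (hf01 j x).1) hfsum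

theorem integral_deviationGain_le [π.Regular] (hu : Continuous u) (i : ι)
    (hyp : ∀ k : ℕ, 0 < k → ∀ t : Fin k → C i, ∀ f : Fin k → C i → ℝ,
      (∀ j, Continuous (f j)) → (∀ j x, f j x ∈ Icc 0 1) → (∀ x, ∑ j, f j x ≤ 1) →
      ∑ j, ∫ s, f j (s i) * deviationGain u i (t j) s ∂π ≤ ε)
    {ζ : C i → C i} (hζ : Measurable ζ) :
    ∫ s, deviationGain u i (ζ (s i)) s ∂π ≤ ε := by
  obtain ⟨M, hM⟩ := exists_abs_deviationGain_le hu i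
  refine le_of_forall_pos_le_add fun δ hδ => ?_
  obtain ⟨k, t, a, ha, ha01, hasum, hζa⟩ :=
    exists_measurable_partition_le_sum_add (continuous_deviationGain hu i) hζ hδ
  have hk : 0 < k := by
    obtain ⟨s⟩ := nonempty_of_isProbabilityMeasure π
    refine Nat.pos_of_ne_zero fun hk => ?_
    subst hk
    simpa using hasum (s i)
  have hint : ∀ j, Integrable (fun s => a j (s i) * deviationGain u i (t j) s) π := fun j =>
    integrable_mul_of_mem_Icc ((ha j).comp (measurable_pi_apply i)) (fun s => ha01 j (s i))
      (measurable_deviationGain hu i (t j)) (hM (t j))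
  have := weaklyRegular_map_eval π i
  calc ∫ s, deviationGain u i (ζ (s i)) s ∂π
      ≤ ∫ s, (∑ j, a j (s i) * deviationGain u i (t j) s + δ) ∂π :=
        integral_mono ((measurable_deviationGain_comp hu i hζ).integrable_of_abs_le fun s => hM _ s)
          ((integrable_finsetSum _ fun j _ => hint j).add (integrable_const δ))
          fun s => hζa (s i) s
    _ = ∑ j, ∫ s, a j (s i) * deviationGain u i (t j) s ∂π + δ := by
        rw [integral_add (integrable_finsetSum _ fun j _ => hint j) (integrable_const δ),
          integral_finsetSum _ fun j _ => hint j]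
        simp
    _ ≤ ε + δ := by
        gcongr
        exact sum_integral_mul_le_of_forall_continuous (measurable_pi_apply i)
          (fun j => measurable_deviationGain hu i (t j)) (fun j => hM (t j)) (hyp k hk t) ha
          ha01 fun x => (hasum x).le

end Game

theorem stmt_8 (n : ℕ) (C : Fin n → Type*)
    [∀ i, TopologicalSpace (C i)] [∀ i, CompactSpace (C i)] [∀ i, T2Space (C i)]
    [∀ i, MeasurableSpace (C i)] [∀ i, BorelSpace (C i)]
    (u : Fin n → (∀ i, C i) → ℝ) (hu : ∀ i, Continuous (u i))
    (π : Measure (∀ i, C i)) [IsProbabilityMeasure π] [π.Regular]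
    (ε : ℝ) :
    (∀ i, ∀ ζ : C i → C i, Measurable ζ →
      ∫ s, (u i (Function.update s i (ζ (s i))) - u i s) ∂π ≤ ε) ↔
    (∀ i, ∀ k : ℕ, 0 < k → ∀ t : Fin k → C i, ∀ f : Fin k → C i → ℝ,
      (∀ j, Continuous (f j)) →
      (∀ j x, f j x ∈ Set.Icc (0 : ℝ) 1) →
      (∀ x, ∑ j, f j x ≤ 1) →
      ∑ j, ∫ s, f j (s i) * (u i (Function.update s i (t j)) - u i s) ∂π ≤ ε) :=
  ⟨fun h i _ _ t _ hf hf01 hfsum =>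
    sum_integral_mul_deviationGain_le (hu i) i (h i) t hf hf01 hfsum,
    fun h i _ hζ => integral_deviationGain_le (hu i) i (h i) hζ⟩
end

section
/- In a polynomial game (strategy sets C_i = [−1,1], polynomial utilities), a probability measure π is a correlated equilibrium if and only if for every player i, every t_i ∈ [−1,1], and every polynomial p, ∫ p(s_i)^2 [u_i(t_i, s_{−i}) − u_i(s)] dπ(s) ≤ 0. -/
/-!
Fix a player `i` and a target strategy `t`, and let `D s = u_i(t, s_{-i}) - u_i(s)`. Departures
that jump to `t` on a measurable set `A` and stay put elsewhere show that a correlated equilibrium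
satisfies `∫ 1_A(s_i) D dπ ≤ 0` for all `t` and `A`. Conversely, a measurable departure is a
pointwise limit of simple ones, whose gain is a finite sum of such terms, and dominated convergence
applies because `u_i` is bounded and continuous.

The condition on the sets `A` says that the image under `s ↦ s_i` of the signed measure `D • π` is
nonpositive, i.e. the image of its positive part lies below the image of its negative part. Finite
Borel measures on a metric space are compared by integrating nonnegative continuous functions, and
by Weierstrass' theorem applied to `√f` every continuous `f ≥ 0` on `[-1, 1]` is a bounded pointwise
limit of squares `p²` of polynomials, so it suffices to test against `p(s_i)²`.
-/

open MeasureTheory Set Filter Topology Function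
open scoped ENNReal NNReal BoundedContinuousFunction

theorem MeasureTheory.Measure.le_of_forall_lintegral_le {Ω : Type*} [MeasurableSpace Ω]
    [TopologicalSpace Ω] [TopologicalSpace.PseudoMetrizableSpace Ω] [BorelSpace Ω]
    {μ ν : Measure Ω} [IsFiniteMeasure μ] [IsFiniteMeasure ν]
    (h : ∀ f : Ω →ᵇ ℝ≥0, ∫⁻ x, f x ∂μ ≤ ∫⁻ x, f x ∂ν) : μ ≤ ν := by
  have closed : ∀ F, IsClosed F → μ F ≤ ν F := fun F hF =>
    le_of_tendsto_of_tendsto' (HasOuterApproxClosed.tendsto_lintegral_apprSeq hF μ)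
      (HasOuterApproxClosed.tendsto_lintegral_apprSeq hF ν) fun n => h _
  refine Measure.le_iff.2 fun A hA => ?_
  rw [hA.measure_eq_iSup_isClosed_of_ne_top (measure_ne_top μ A)]
  exact iSup₂_le fun F hFA => iSup_le fun hF => (closed F hF).trans (measure_mono hFA)

namespace MeasureTheory

variable {X Y : Type*} [MeasurableSpace X] [MeasurableSpace Y]

/-- The image under `e` of the positive part of the signed measure `g • π`; the image of its
negative part is `π.densityMap e (-g)`. -/
noncomputable def Measure.densityMap (π : Measure X) (e : X → Y) (g : X → ℝ) : Measure Y :=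
  (π.withDensity fun x => ENNReal.ofReal (g x)).map e

variable {π : Measure X} {e : X → Y} {g : X → ℝ}

theorem isFiniteMeasure_densityMap (hg : Integrable g π) : IsFiniteMeasure (π.densityMap e g) :=
  have := isFiniteMeasure_withDensity_ofReal hg.2
  Measure.isFiniteMeasure_map _ _

theorem integral_densityMap (he : Measurable e) (hg : Measurable g) {f : Y → ℝ}
    (hf : Measurable f) : ∫ y, f y ∂π.densityMap e g = ∫ x, max (g x) 0 * f (e x) ∂π := by
  rw [Measure.densityMap, integral_map he.aemeasurable hf.aestronglyMeasurable]
  exact (integral_withDensity_eq_integral_smul hg.real_toNNReal _).trans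
    (integral_congr_ae (.of_forall fun x => by simp [NNReal.smul_def]))

theorem integral_densityMap_sub_integral_densityMap_neg (he : Measurable e) (hg : Measurable g)
    (hgi : Integrable g π) {f : Y → ℝ} (hf : Measurable f) {C : ℝ} (hfC : ∀ y, ‖f y‖ ≤ C) :
    ∫ y, f y ∂π.densityMap e g - ∫ y, f y ∂π.densityMap e (-g) = ∫ x, f (e x) * g x ∂π := by
  have hfe : AEStronglyMeasurable (fun x => f (e x)) π := (hf.comp he).aestronglyMeasurable
  rw [integral_densityMap he hg hf, integral_densityMap he hg.neg hf,
    ← integral_sub (hgi.pos_part.mul_bdd hfe (.of_forall fun x => hfC _))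
      (hgi.neg.pos_part.mul_bdd hfe (.of_forall fun x => hfC _))]
  refine integral_congr_ae (.of_forall fun x => ?_)
  dsimp only
  rw [Pi.neg_apply, ← sub_mul, max_zero_sub_max_neg_zero_eq_self, mul_comm]

theorem densityMap_le_densityMap_neg_iff (he : Measurable e) (hg : Measurable g)
    (hgi : Integrable g π) :
    π.densityMap e g ≤ π.densityMap e (-g) ↔
      ∀ A, MeasurableSet A → ∫ x, A.indicator 1 (e x) * g x ∂π ≤ 0 := by
  have := isFiniteMeasure_densityMap (e := e) hgi
  have := isFiniteMeasure_densityMap (e := e) hgi.neg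
  rw [Measure.le_iff]
  refine forall₂_congr fun A hA => ?_
  rw [← integral_densityMap_sub_integral_densityMap_neg he hg hgi (measurable_one.indicator hA)
      (C := 1) fun y => (norm_indicator_le_norm_self _ _).trans_eq (by simp),
    integral_indicator_one hA, integral_indicator_one hA, sub_nonpos, measureReal_def,
    measureReal_def, ENNReal.toReal_le_toReal (measure_ne_top _ _) (measure_ne_top _ _)]

theorem integral_comp_mul_nonpos_of_forall_polynomial_sq {a b : ℝ} {e : X → Icc a b}
    (he : Measurable e) (hgi : Integrable g π)
    (h : ∀ p : Polynomial ℝ, ∫ x, p.eval (e x : ℝ) ^ 2 * g x ∂π ≤ 0)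
    (f : C(Icc a b, ℝ)) (hf : 0 ≤ f) : ∫ x, f (e x) * g x ∂π ≤ 0 := by
  -- polynomials `q k` converging uniformly to `√f`, so that `(q k)² → f` boundedly
  let r : C(Icc a b, ℝ) := ⟨fun y => √(f y), by fun_prop⟩
  choose q hq using fun k : ℕ =>
    exists_polynomial_near_continuousMap a b r (1 / (k + 1)) Nat.one_div_pos_of_nat
  have hclose (k : ℕ) (y : Icc a b) : ‖(q k).eval (y : ℝ) - r y‖ < 1 / (k + 1) :=
    (ContinuousMap.norm_coe_le_norm _ y).trans_lt (hq k)
  have hbound (k : ℕ) (y : Icc a b) : ‖(q k).eval (y : ℝ)‖ ≤ ‖r‖ + 1 := by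
    have := (hclose k y).le.trans ((div_le_one (by positivity)).2 (by simp))
    calc ‖(q k).eval (y : ℝ)‖ ≤ ‖r y‖ + ‖(q k).eval (y : ℝ) - r y‖ := norm_le_insert' _ _
      _ ≤ ‖r‖ + 1 := add_le_add (r.norm_coe_le_norm y) this
  have hlim (y : Icc a b) : Tendsto (fun k => (q k).eval (y : ℝ) ^ 2) atTop (𝓝 (f y)) := by
    have hfy : f y = r y ^ 2 := (Real.sq_sqrt (hf y)).symm
    rw [hfy]
    refine (tendsto_iff_norm_sub_tendsto_zero.2 ?_).pow 2
    exact squeeze_zero (fun _ => norm_nonneg _) (fun k => (hclose k y).le)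
      tendsto_one_div_add_atTop_nhds_zero_nat
  refine le_of_tendsto' (tendsto_integral_of_dominated_convergence
    (fun x => (‖r‖ + 1) ^ 2 * ‖g x‖) (fun k => ?_) (hgi.norm.const_mul _) (fun k => ?_)
    (.of_forall fun x => (hlim (e x)).mul_const (g x))) fun k => h (q k)
  · exact ((q k).continuous.measurable.comp (measurable_subtype_coe.comp he)).pow_const 2
      |>.aestronglyMeasurable.mul hgi.1
  · refine .of_forall fun x => ?_
    rw [norm_mul, norm_pow]
    gcongr
    exact hbound k (e x)

theorem densityMap_le_densityMap_neg_iff_forall_sq {a b : ℝ} {e : X → Icc a b}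
    (he : Measurable e) (hg : Measurable g) (hgi : Integrable g π) :
    π.densityMap e g ≤ π.densityMap e (-g) ↔
      ∀ p : Polynomial ℝ, ∫ x, p.eval (e x : ℝ) ^ 2 * g x ∂π ≤ 0 := by
  have := isFiniteMeasure_densityMap (e := e) hgi
  have := isFiniteMeasure_densityMap (e := e) hgi.neg
  constructor
  · intro hle p
    let P := p.toContinuousMapOn (Icc a b)
    have hP (y : Icc a b) : ‖P y ^ 2‖ ≤ ‖P‖ ^ 2 := by
      rw [norm_pow]
      gcongr
      exact P.norm_coe_le_norm y
    have hPm : Measurable fun y => P y ^ 2 := (P.continuous.pow 2).measurable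
    refine (integral_densityMap_sub_integral_densityMap_neg he hg hgi hPm hP).symm.le.trans
      (sub_nonpos.2 ?_)
    exact integral_mono_measure hle (.of_forall fun y => sq_nonneg (P y))
      (.of_bound hPm.aestronglyMeasurable _ (.of_forall hP))
  · refine fun h => Measure.le_of_forall_lintegral_le fun F => ?_
    let f : C(Icc a b, ℝ) := ⟨fun y => F y, by fun_prop⟩
    have hf := integral_comp_mul_nonpos_of_forall_polynomial_sq he hgi h f fun y => (F y).2
    rw [← integral_densityMap_sub_integral_densityMap_neg he hg hgi f.continuous.measurable
      f.norm_coe_le_norm, sub_nonpos] at hf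
    rwa [← ENNReal.toReal_le_toReal (F.lintegral_lt_top_of_nnreal _).ne
      (F.lintegral_lt_top_of_nnreal _).ne,
      BoundedContinuousFunction.toReal_lintegral_coe_eq_integral,
      BoundedContinuousFunction.toReal_lintegral_coe_eq_integral]

end MeasureTheory

section Deviation

variable {ι S : Type*} [Countable ι] [DecidableEq ι] [PseudoMetricSpace S]
  [TopologicalSpace.SeparableSpace S] [MeasurableSpace S] [BorelSpace S]
  (w : (ι → S) →ᵇ ℝ) (i : ι)

theorem measurable_deviation {ζ : S → S} (hζ : Measurable ζ) :
    Measurable fun s => w (update s i (ζ (s i))) - w s := by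
  have : Measurable fun s : ι → S => update s i (ζ (s i)) := by fun_prop
  exact (w.continuous.measurable.comp this).sub w.continuous.measurable

variable (π : Measure (ι → S)) [IsFiniteMeasure π]

theorem integrable_deviation {ζ : S → S} (hζ : Measurable ζ) :
    Integrable (fun s => w (update s i (ζ (s i))) - w s) π := by
  refine .of_bound (measurable_deviation w i hζ).aestronglyMeasurable (2 * ‖w‖)
    (.of_forall fun s => ?_)
  rw [← dist_eq_norm]
  exact w.dist_le_two_norm _ _

theorem integral_deviation_simpleFunc_nonpos_of_forall_indicator
    (h : ∀ t A, MeasurableSet A →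
      ∫ s, A.indicator 1 (s i) * (w (update s i t) - w s) ∂π ≤ 0)
    (φ : SimpleFunc S S) : ∫ s, (w (update s i (φ (s i))) - w s) ∂π ≤ 0 := by
  have hsum (s : ι → S) : w (update s i (φ (s i))) - w s =
      ∑ t ∈ φ.range, (φ ⁻¹' {t}).indicator 1 (s i) * (w (update s i t) - w s) := by
    rw [Finset.sum_eq_single_of_mem (φ (s i)) (φ.mem_range_self _) fun t _ ht => ?_]
    · simp
    · simp [Ne.symm ht]
  simp_rw [hsum]
  rw [integral_finsetSum _ fun t _ => ?_]
  · exact Finset.sum_nonpos fun t _ => h t _ (φ.measurableSet_fiber t)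
  · exact (integrable_deviation w i π measurable_const).bdd_mul (c := 1)
      ((measurable_one.indicator (φ.measurableSet_fiber t)).comp
        (measurable_pi_apply i)).aestronglyMeasurable
      (.of_forall fun s => (norm_indicator_le_norm_self _ _).trans_eq (by simp))

theorem integral_deviation_nonpos_of_forall_simpleFunc [Nonempty S]
    (h : ∀ φ : SimpleFunc S S, ∫ s, (w (update s i (φ (s i))) - w s) ∂π ≤ 0)
    {ζ : S → S} (hζ : Measurable ζ) : ∫ s, (w (update s i (ζ (s i))) - w s) ∂π ≤ 0 := by
  let y₀ : S := Classical.arbitrary S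
  let φ n := SimpleFunc.approxOn ζ hζ univ y₀ (mem_univ _) n
  have hφ (y : S) : Tendsto (fun n => φ n y) atTop (𝓝 (ζ y)) :=
    SimpleFunc.tendsto_approxOn hζ (mem_univ _) (by simp)
  refine le_of_tendsto' (tendsto_integral_of_dominated_convergence (fun _ => 2 * ‖w‖)
    (fun n => (integrable_deviation w i π (φ n).measurable).1) (integrable_const _)
    (fun n => .of_forall fun s => ?_) (.of_forall fun s => ?_)) fun n => h (φ n)
  · rw [← dist_eq_norm]
    exact w.dist_le_two_norm _ _
  · have : Continuous fun t => w (update s i t) - w s := by fun_prop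
    exact (this.tendsto _).comp (hφ (s i))

theorem integral_deviation_nonpos_iff [Nonempty S] :
    (∀ ζ : S → S, Measurable ζ → ∫ s, (w (update s i (ζ (s i))) - w s) ∂π ≤ 0) ↔
      ∀ t A, MeasurableSet A → ∫ s, A.indicator 1 (s i) * (w (update s i t) - w s) ∂π ≤ 0 := by
  refine ⟨fun h t A hA => ?_, fun h ζ hζ => integral_deviation_nonpos_of_forall_simpleFunc w i π
    (integral_deviation_simpleFunc_nonpos_of_forall_indicator w i π h) hζ⟩
  classical
  refine (integral_congr_ae (.of_forall fun s => ?_)).trans_le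
    (h (A.piecewise (fun _ => t) id) (measurable_const.piecewise hA measurable_id))
  by_cases hs : s i ∈ A <;> simp [hs]

end Deviation

theorem stmt_9 (n : ℕ) (U : Fin n → MvPolynomial (Fin n) ℝ)
    (π : Measure (Fin n → Set.Icc (-1 : ℝ) 1)) [IsProbabilityMeasure π]
    (u : Fin n → (Fin n → Set.Icc (-1 : ℝ) 1) → ℝ)
    (hu : ∀ i s, u i s = MvPolynomial.eval (fun j => (s j : ℝ)) (U i)) :
    (∀ i, ∀ ζ : Set.Icc (-1 : ℝ) 1 → Set.Icc (-1 : ℝ) 1, Measurable ζ →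
      ∫ s, (u i (Function.update s i (ζ (s i))) - u i s) ∂π ≤ 0) ↔
    (∀ i, ∀ tᵢ : Set.Icc (-1 : ℝ) 1, ∀ p : Polynomial ℝ,
      ∫ s, (p.eval (s i : ℝ)) ^ 2 *
        (u i (Function.update s i tᵢ) - u i s) ∂π ≤ 0) := by
  have hu_cont (i : Fin n) : Continuous (u i) := by
    rw [funext (hu i)]
    exact (MvPolynomial.continuous_eval (U i)).comp (by fun_prop)
  have : Nonempty (Icc (-1 : ℝ) 1) := ⟨⟨0, by norm_num⟩⟩
  refine forall_congr' fun i => ?_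
  let w := BoundedContinuousFunction.mkOfCompact ⟨u i, hu_cont i⟩
  refine (integral_deviation_nonpos_iff w i π).trans (forall_congr' fun t => ?_)
  have hg := measurable_deviation w i (measurable_const (a := t))
  have hgi := integrable_deviation w i π (measurable_const (a := t))
  exact (densityMap_le_densityMap_neg_iff (measurable_pi_apply i) hg hgi).symm.trans
    (densityMap_le_densityMap_neg_iff_forall_sq (measurable_pi_apply i) hg hgi)
end

section
/- A finite sequence of real numbers (μ^0, …, μ^k) arises as the moments μ^i = ∫ x^i dμ(x) of some finite positive Borel measure μ on [−1,1] if and only if ∑_{i=0}^k p_i μ^i ≥ 0 for every polynomial p(x) = ∑_{i=0}^k p_i x^i of degree at most k that is nonnegative on [−1,1]. -/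
/-!
A polynomial of degree at most `k` is the same thing as a linear functional on `ℝ^(k+1)`
evaluated along the moment curve `x ↦ (x ^ i)ᵢ`, so the condition says that `m` is nonnegative
against every functional that is nonnegative on the curve over `[-1, 1]`. Integrating gives
necessity. Conversely, testing `1` and `1 ± x ^ i` shows `m₀ ≥ 0`, and `m = 0` when `m₀ = 0`.
When `m₀ > 0`, the vector `m / m₀` lies in the convex hull of the curve: this hull is compact by
Carathéodory, so otherwise Hahn–Banach would separate it from `m / m₀` by a functional that is
positive on the curve but negative at `m`. Points of the hull are moments of finitely supported
probability measures.
-/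

open MeasureTheory Set Polynomial Module

section Caratheodory

variable {𝕜 E : Type*} [Field 𝕜] [LinearOrder 𝕜] [IsStrictOrderedRing 𝕜] [AddCommGroup E]
  [Module 𝕜 E] [FiniteDimensional 𝕜 E]

theorem convexHull_eq_image_stdSimplex (s : Set E) :
    convexHull 𝕜 s =
      (fun p : (Fin (finrank 𝕜 E + 1) → 𝕜) × (Fin (finrank 𝕜 E + 1) → E) => ∑ j, p.1 j • p.2 j) ''
        (stdSimplex 𝕜 _ ×ˢ univ.pi fun _ => s) := by
  refine Subset.antisymm (fun x hx => ?_) ?_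
  · obtain ⟨ι, _, z, w, hzs, hz, hw₀, hw₁, rfl⟩ := eq_pos_convex_span_of_mem_convexHull hx
    have : Nonempty ι := by
      by_contra! hι
      simp at hw₁
    have hcard : Fintype.card ι ≤ Fintype.card (Fin (finrank 𝕜 E + 1)) := by
      simpa using hz.card_le_finrank_succ.trans (Nat.succ_le_succ (Submodule.finrank_le _))
    obtain ⟨e⟩ : Nonempty (ι ↪ Fin (finrank 𝕜 E + 1)) :=
      Function.Embedding.nonempty_of_card_le hcard
    set w' := (range e).indicator (w ∘ Function.invFun e)
    have hw' : ∀ i, w' (e i) = w i := fun i => by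
      simp [w', Function.leftInverse_invFun e.injective i]
    have hw'₀ : ∀ j ∉ range e, w' j = 0 := fun j hj => indicator_of_notMem hj _
    refine ⟨(w', z ∘ Function.invFun e), ⟨⟨indicator_nonneg fun j _ => (hw₀ _).le, ?_⟩,
      fun j _ => hzs (mem_range_self _)⟩, ?_⟩
    · rw [← hw₁]
      exact (Fintype.sum_of_injective e e.injective _ _ hw'₀ fun i => (hw' i).symm).symm
    · refine (Fintype.sum_of_injective e e.injective _ _ (fun j hj => by simp [hw'₀ j hj])
        fun i => ?_).symm
      simp [hw', Function.leftInverse_invFun e.injective i]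
  · rintro _ ⟨⟨w, z⟩, ⟨hw, hz⟩, rfl⟩
    exact (convex_convexHull 𝕜 s).sum_mem (fun j _ => hw.1 j) hw.2
      fun j _ => subset_convexHull 𝕜 s (hz j (mem_univ j))

end Caratheodory

theorem IsCompact.convexHull {E : Type*} [TopologicalSpace E] [AddCommGroup E] [Module ℝ E]
    [ContinuousAdd E] [ContinuousSMul ℝ E] [FiniteDimensional ℝ E] {s : Set E}
    (hs : IsCompact s) : IsCompact (convexHull ℝ s) := by
  rw [convexHull_eq_image_stdSimplex]
  exact ((isCompact_stdSimplex ℝ _).prod (isCompact_univ_pi fun _ => hs)).image <|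
    continuous_finsetSum _ fun j _ =>
      ((continuous_apply j).comp continuous_fst).smul ((continuous_apply j).comp continuous_snd)

section PolynomialPairing

variable {R : Type*} [CommSemiring R]

def momentCurve (k : ℕ) (x : R) : Fin (k + 1) → R := fun i => x ^ (i : ℕ)

theorem continuous_momentCurve [TopologicalSpace R] [IsTopologicalSemiring R] (k : ℕ) :
    Continuous (momentCurve (R := R) k) :=
  continuous_pi fun i => continuous_pow i

variable {k : ℕ}

theorem Polynomial.eval_eq_sum_fin {p : R[X]} (hp : p.degree ≤ k) (x : R) :
    p.eval x = ∑ i : Fin (k + 1), p.coeff i * x ^ (i : ℕ) := by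
  rw [eval_eq_sum_range' (Nat.lt_succ_of_le (natDegree_le_iff_degree_le.2 hp)), Finset.sum_range]

theorem LinearMap.exists_polynomial_eq (f : (Fin (k + 1) → R) →ₗ[R] R) :
    ∃ p : R[X], p.degree ≤ k ∧ ∀ m, ∑ i : Fin (k + 1), p.coeff i * m i = f m := by
  classical
  refine ⟨∑ i : Fin (k + 1), monomial i (f fun j => if i = j then 1 else 0), ?_, fun m => ?_⟩
  · refine (degree_sum_le _ _).trans (Finset.sup_le fun i _ => (degree_monomial_le _ _).trans ?_)
    exact_mod_cast Nat.lt_succ_iff.1 i.isLt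
  · rw [LinearMap.pi_apply_eq_sum_univ f m]
    refine Finset.sum_congr rfl fun i _ => ?_
    simp [finsetSum_coeff, coeff_monomial, Fin.val_inj, mul_comm]

theorem forall_polynomial_nonneg_iff_forall_linearMap_nonneg [LE R] (S : Set R)
    (m : Fin (k + 1) → R) :
    (∀ p : R[X], p.degree ≤ k → (∀ x ∈ S, 0 ≤ p.eval x) →
      0 ≤ ∑ i : Fin (k + 1), p.coeff i * m i) ↔
    ∀ f : (Fin (k + 1) → R) →ₗ[R] R, (∀ x ∈ S, 0 ≤ f (momentCurve k x)) → 0 ≤ f m := by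
  have eval_eq {p : R[X]} (hp : p.degree ≤ k) {f : (Fin (k + 1) → R) →ₗ[R] R}
      (hpf : ∀ m, ∑ i : Fin (k + 1), p.coeff i * m i = f m) (x : R) :
      p.eval x = f (momentCurve k x) := by
    rw [eval_eq_sum_fin hp, ← hpf]
    rfl
  constructor
  · intro h f hf
    obtain ⟨p, hp, hpf⟩ := f.exists_polynomial_eq
    rw [← hpf]
    exact h p hp fun x hx => eval_eq hp hpf x ▸ hf x hx
  · intro h p hp hpos
    have hpf (m : Fin (k + 1) → R) :
        ∑ i : Fin (k + 1), p.coeff i * m i =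
          (∑ i : Fin (k + 1), p.coeff i • LinearMap.proj (R := R) i) m := by
      simp
    rw [hpf]
    exact h _ fun x hx => eval_eq hp hpf x ▸ hpos x hx

end PolynomialPairing

theorem Continuous.integrable_of_measure_compl_eq_zero {X E : Type*} [MeasurableSpace X]
    [TopologicalSpace X] [OpensMeasurableSpace X] [T2Space X] [NormedAddCommGroup E]
    {μ : Measure X} [IsFiniteMeasureOnCompacts μ] {f : X → E} {K : Set X} (hf : Continuous f)
    (hK : IsCompact K) (hμK : μ Kᶜ = 0) : Integrable f μ := by
  have h := hf.continuousOn.integrableOn_compact (μ := μ) hK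
  rwa [IntegrableOn, Measure.restrict_eq_self_of_ae_mem (ae_iff.2 hμK)] at h

def hausdorffMomentCone (k : ℕ) : PointedCone ℝ (Fin (k + 1) → ℝ) where
  carrier := {m | ∃ μ : Measure ℝ, IsFiniteMeasure μ ∧ μ (Icc (-1 : ℝ) 1)ᶜ = 0 ∧
    ∀ i : Fin (k + 1), m i = ∫ x, x ^ (i : ℕ) ∂μ}
  add_mem' := by
    rintro m n ⟨μ, _, hμK, hm⟩ ⟨ν, _, hνK, hn⟩
    refine ⟨μ + ν, inferInstance, by simp [hμK, hνK], fun i => ?_⟩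
    have hint {ρ : Measure ℝ} [IsFiniteMeasure ρ] (hρK : ρ (Icc (-1 : ℝ) 1)ᶜ = 0) :
        Integrable (fun x : ℝ => x ^ (i : ℕ)) ρ :=
      (continuous_pow _).integrable_of_measure_compl_eq_zero isCompact_Icc hρK
    rw [integral_add_measure (hint hμK) (hint hνK), Pi.add_apply, hm, hn]
  zero_mem' := ⟨0, inferInstance, rfl, fun _ => by simp⟩
  smul_mem' := by
    rintro c m ⟨μ, _, hμK, hm⟩
    refine ⟨(c : ℝ).toNNReal • μ, inferInstance, by simp [hμK], fun i => ?_⟩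
    rw [integral_smul_nnreal_measure, NNReal.smul_def, Real.coe_toNNReal _ c.2, ← hm]
    rfl

theorem mem_hausdorffMomentCone {k : ℕ} {m : Fin (k + 1) → ℝ} :
    m ∈ hausdorffMomentCone k ↔ ∃ μ : Measure ℝ, IsFiniteMeasure μ ∧
      μ (Icc (-1 : ℝ) 1)ᶜ = 0 ∧ ∀ i : Fin (k + 1), m i = ∫ x, x ^ (i : ℕ) ∂μ :=
  Iff.rfl

theorem momentCurve_mem_hausdorffMomentCone {k : ℕ} {x : ℝ} (hx : x ∈ Icc (-1 : ℝ) 1) :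
    momentCurve k x ∈ hausdorffMomentCone k := by
  refine ⟨Measure.dirac x, inferInstance, ?_, fun i => by simp [momentCurve]⟩
  rw [Measure.dirac_apply' _ measurableSet_Icc.compl, indicator_of_notMem (notMem_compl_iff.2 hx)]

theorem convexHull_momentCurve_subset (k : ℕ) :
    convexHull ℝ (momentCurve k '' Icc (-1 : ℝ) 1) ⊆ hausdorffMomentCone k :=
  convexHull_min (image_subset_iff.2 fun _ => momentCurve_mem_hausdorffMomentCone)
    (hausdorffMomentCone k).convex

theorem apply_nonneg_of_mem_hausdorffMomentCone {k : ℕ} {m : Fin (k + 1) → ℝ}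
    (hm : m ∈ hausdorffMomentCone k) (f : (Fin (k + 1) → ℝ) →ₗ[ℝ] ℝ)
    (hf : ∀ x ∈ Icc (-1 : ℝ) 1, 0 ≤ f (momentCurve k x)) : 0 ≤ f m := by
  obtain ⟨μ, _, hμK, hm⟩ := hm
  set e : Fin (k + 1) → Fin (k + 1) → ℝ := fun i j => if i = j then 1 else 0
  have hint (i : Fin (k + 1)) : Integrable (fun x : ℝ => x ^ (i : ℕ) • f (e i)) μ :=
    ((continuous_pow _).smul continuous_const).integrable_of_measure_compl_eq_zero isCompact_Icc hμK
  calc 0 ≤ ∫ x, f (momentCurve k x) ∂μ := integral_nonneg_of_ae <| (ae_iff.2 hμK).mono hf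
    _ = ∫ x, ∑ i : Fin (k + 1), x ^ (i : ℕ) • f (e i) ∂μ :=
      integral_congr_ae <| .of_forall fun x => f.pi_apply_eq_sum_univ _
    _ = f m := by
      rw [integral_finsetSum _ fun i _ => hint i, f.pi_apply_eq_sum_univ m]
      simp_rw [integral_smul_const, hm]
      rfl

theorem mem_convexHull_momentCurve_of_apply_nonneg {k : ℕ} {m : Fin (k + 1) → ℝ} (hm₀ : m 0 = 1)
    (hm : ∀ f : (Fin (k + 1) → ℝ) →ₗ[ℝ] ℝ, (∀ x ∈ Icc (-1 : ℝ) 1, 0 ≤ f (momentCurve k x)) →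
      0 ≤ f m) :
    m ∈ convexHull ℝ (momentCurve k '' Icc (-1 : ℝ) 1) := by
  by_contra hm_not
  obtain ⟨f, u, hfm, hfu⟩ := geometric_hahn_banach_point_closed (convex_convexHull ℝ _)
    (isCompact_Icc.image (continuous_momentCurve k)).convexHull.isClosed hm_not
  -- the curve has zeroth coordinate `1`, so on it `f - u` agrees with `f - u • proj 0`
  have key := hm (f.toLinearMap - u • LinearMap.proj 0) fun x hx => by
    simpa [momentCurve] using (hfu _ (subset_convexHull ℝ _ (mem_image_of_mem _ hx))).le
  linarith [show u ≤ f m by simpa [hm₀] using key]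

theorem mem_hausdorffMomentCone_of_apply_nonneg {k : ℕ} {m : Fin (k + 1) → ℝ}
    (hm : ∀ f : (Fin (k + 1) → ℝ) →ₗ[ℝ] ℝ, (∀ x ∈ Icc (-1 : ℝ) 1, 0 ≤ f (momentCurve k x)) →
      0 ≤ f m) :
    m ∈ hausdorffMomentCone k := by
  have hm₀ : 0 ≤ m 0 := hm (LinearMap.proj 0) fun x _ => by simp [momentCurve]
  rcases hm₀.eq_or_lt with hzero | hpos
  · suffices m = 0 from this ▸ (hausdorffMomentCone k).zero_mem
    funext i
    have hpow {x : ℝ} (hx : x ∈ Icc (-1 : ℝ) 1) : |x ^ (i : ℕ)| ≤ 1 := by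
      rw [abs_pow]
      exact pow_le_one₀ (abs_nonneg x) (abs_le.2 hx)
    have h₁ := hm (.proj 0 + .proj i) fun x hx => by
      simpa [momentCurve, neg_le_iff_add_nonneg'] using (abs_le.1 (hpow hx)).1
    have h₂ := hm (.proj 0 - .proj i) fun x hx => by
      simpa [momentCurve] using (abs_le.1 (hpow hx)).2
    exact le_antisymm (by simpa [← hzero] using h₂) (by simpa [← hzero] using h₁)
  · have hnorm : (m 0)⁻¹ • m ∈ hausdorffMomentCone k :=
      convexHull_momentCurve_subset k <| mem_convexHull_momentCurve_of_apply_nonneg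
        (by simp [hpos.ne']) fun f hf => by
          rw [map_smul]
          exact smul_nonneg (inv_nonneg.2 hpos.le) (hm f hf)
    exact ((hausdorffMomentCone k).smul_mem_iff (inv_pos.2 hpos)).1 hnorm

theorem stmt_19 (k : ℕ) (μmom : Fin (k + 1) → ℝ) :
    (∃ μ : Measure ℝ, IsFiniteMeasure μ ∧ μ (Set.Icc (-1 : ℝ) 1)ᶜ = 0 ∧
      ∀ i : Fin (k + 1), μmom i = ∫ x, x ^ (i : ℕ) ∂μ) ↔
    (∀ p : Polynomial ℝ, p.degree ≤ k →
      (∀ x ∈ Set.Icc (-1 : ℝ) 1, 0 ≤ p.eval x) →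
      0 ≤ ∑ i : Fin (k + 1), p.coeff i * μmom i) := by
  rw [← mem_hausdorffMomentCone, forall_polynomial_nonneg_iff_forall_linearMap_nonneg]
  exact ⟨apply_nonneg_of_mem_hausdorffMomentCone, mem_hausdorffMomentCone_of_apply_nonneg⟩
end
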